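/- arXiv:2202.01919 — 9 statements merged into one kernel-verified Lean document; each statement's English description precedes it below -/
import Mathlib

section
/- Let H_1,…,H_M be M distinct hyperplanes in ℝⁿ. Then the number of connected components of ℝⁿ \ (H_1 ∪ … ∪ H_M) is at most Σ_{i=0}^n C(M,i), with equality when the hyperplanes are in general position. -/
namespace Stmt2Aux

open Finset

variable {n m : ℕ}

lemma sum_choose_succ (m d : ℕ) :
    ∑ i ∈ range (d + 1), (m + 1).choose i
      = ∑ i ∈ range (d + 1), m.choose i + ∑ i ∈ range d, m.choose i := by
  induction d with
  | zero => simp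
  | succ d ih =>
      rw [Finset.sum_range_succ, ih, Finset.sum_range_succ (f := fun i => m.choose i) (n := d+1),
        Finset.sum_range_succ (f := fun i => m.choose i) (n := d), Nat.choose_succ_succ]
      ring

lemma sum_choose_zero (d : ℕ) : ∑ i ∈ range (d + 1), (0 : ℕ).choose i = 1 := by
  induction d with
  | zero => simp
  | succ d ih => rw [Finset.sum_range_succ, ih, Nat.choose_zero_succ]

lemma sign_pres {a c t : ℝ} (h0 : 0 ≤ t) (h1 : t ≤ 1)
    (hac : 0 < a ↔ 0 < c) (ha : a ≠ 0) (hc : c ≠ 0) :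
    (0 < t * (c - a) + a ↔ 0 < a) ∧ t * (c - a) + a ≠ 0 := by
  rcases lt_or_gt_of_ne ha with hneg | hpos
  · have hcneg : c < 0 := by
      rcases lt_or_gt_of_ne hc with h | h
      · exact h
      · exact absurd (hac.mpr h) (not_lt.mpr hneg.le)
    have : t * (c - a) + a < 0 := by
      rcases h0.lt_or_eq with ht | ht
      · nlinarith [mul_pos ht (neg_pos.mpr hcneg), mul_nonneg (sub_nonneg.mpr h1) (neg_nonneg.mpr hneg.le)]
      · rw [← ht]; simpa using hneg
    constructor
    · constructor <;> intro h' <;> [exact absurd h' (not_lt.mpr this.le); exact absurd h' (not_lt.mpr hneg.le)]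
    · exact ne_of_lt this
  · have hcpos : 0 < c := hac.mp hpos
    have : 0 < t * (c - a) + a := by
      rcases h0.lt_or_eq with ht | ht
      · nlinarith [mul_pos ht hcpos, mul_nonneg (sub_nonneg.mpr h1) hpos.le]
      · rw [← ht]; simpa using hpos
    exact ⟨⟨fun _ => hpos, fun _ => this⟩, ne_of_gt this⟩

noncomputable def zeroSet (f : (Fin n → ℝ) →ᵃ[ℝ] ℝ) : AffineSubspace ℝ (Fin n → ℝ) where
  carrier := {x | f x = 0}
  smul_vsub_vadd_mem' c p1 p2 p3 h1 h2 h3 := by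
    simp only [Set.mem_setOf_eq] at *
    have : f (c • (p1 -ᵥ p2) +ᵥ p3) = c • (f p1 - f p2) + f p3 := by
      rw [AffineMap.map_vadd, map_smul, AffineMap.linearMap_vsub]
      simp [vsub_eq_sub, vadd_eq_add]
    rw [this, h1, h2, h3]; simp

@[simp] lemma mem_zeroSet {f : (Fin n → ℝ) →ᵃ[ℝ] ℝ} {x : Fin n → ℝ} :
    x ∈ zeroSet f ↔ f x = 0 := Iff.rfl

/-- Dimension drop lemma: if `A` contains points where `f` is positive and negative,
then `A ⊓ zeroSet f` has direction of finrank `< finrank A.direction`. -/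

lemma finrank_inf_zeroSet_lt (A : AffineSubspace ℝ (Fin n → ℝ))
    (f : (Fin n → ℝ) →ᵃ[ℝ] ℝ) {xp xq : Fin n → ℝ}
    (hxp : xp ∈ A) (hxq : xq ∈ A) (hne : f xp ≠ f xq) :
    Module.finrank ℝ (A ⊓ zeroSet f).direction < Module.finrank ℝ A.direction := by
  have hv : xp -ᵥ xq ∈ A.direction := AffineSubspace.vsub_mem_direction hxp hxq
  have hlv : f.linear (xp -ᵥ xq) ≠ 0 := by
    rw [AffineMap.linearMap_vsub]; exact sub_ne_zero.mpr hne
  set D := A.direction ⊓ LinearMap.ker f.linear with hD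
  have hDlt : D < A.direction := by
    refine lt_of_le_of_ne inf_le_left ?_
    intro h
    rw [← h] at hv
    exact hlv (hv.2)
  have hsub : (A ⊓ zeroSet f).direction ≤ D := by
    refine le_inf (AffineSubspace.direction_le inf_le_left) ?_
    rw [AffineSubspace.direction_eq_vectorSpan, vectorSpan_def]
    rw [Submodule.span_le]
    rintro v ⟨a, ha, b, hb, rfl⟩
    have ha' : f a = 0 := ha.2
    have hb' : f b = 0 := hb.2
    simp only [SetLike.mem_coe, LinearMap.mem_ker, AffineMap.linearMap_vsub, ha', hb']
    simp
  calc Module.finrank ℝ (A ⊓ zeroSet f).direction ≤ Module.finrank ℝ D :=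
        Submodule.finrank_mono hsub
    _ < Module.finrank ℝ A.direction := Submodule.finrank_lt_finrank_of_lt hDlt

def realizes (f : Fin m → ((Fin n → ℝ) →ᵃ[ℝ] ℝ)) (x : Fin n → ℝ) (σ : Fin m → Bool) : Prop :=
  ∀ i, f i x ≠ 0 ∧ (σ i = true ↔ 0 < f i x)

lemma affine_apply_smul_vadd (f : (Fin n → ℝ) →ᵃ[ℝ] ℝ) (t : ℝ) (v x : Fin n → ℝ) :
    f (t • v +ᵥ x) = t * f.linear v + f x := by
  rw [AffineMap.map_vadd, map_smul]
  simp [vadd_eq_add, smul_eq_mul]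

lemma perturb_core {A : AffineSubspace ℝ (Fin n → ℝ)}
    {g : Fin m → ((Fin n → ℝ) →ᵃ[ℝ] ℝ)} {fl : (Fin n → ℝ) →ᵃ[ℝ] ℝ} {x₀ : Fin n → ℝ}
    (hx : x₀ ∈ A) (hg : ∀ i, g i x₀ ≠ 0) (hfl : fl x₀ = 0)
    {v : Fin n → ℝ} (hv : v ∈ A.direction) (hlv : 0 < fl.linear v) :
    (∃ xp ∈ A, (∀ i, (0 < g i xp ↔ 0 < g i x₀) ∧ g i xp ≠ 0) ∧ 0 < fl xp) ∧
    (∃ xq ∈ A, (∀ i, (0 < g i xq ↔ 0 < g i x₀) ∧ g i xq ≠ 0) ∧ fl xq < 0) := by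
  have hev : ∀ᶠ t in nhds (0:ℝ), ∀ i, (0 < g i (t • v +ᵥ x₀) ↔ 0 < g i x₀) ∧ g i (t • v +ᵥ x₀) ≠ 0 := by
    rw [Filter.eventually_all]
    intro i
    have hcont : Continuous (fun t : ℝ => t * (g i).linear v + g i x₀) := by fun_prop
    have heq : ∀ t : ℝ, g i (t • v +ᵥ x₀) = t * (g i).linear v + g i x₀ :=
      fun t => affine_apply_smul_vadd (g i) t v x₀
    rcases (hg i).lt_or_gt with hneg | hpos
    · have hU : {t : ℝ | g i (t • v +ᵥ x₀) < 0} ∈ nhds (0:ℝ) := by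
        have : {t : ℝ | g i (t • v +ᵥ x₀) < 0} = (fun t : ℝ => t * (g i).linear v + g i x₀) ⁻¹' Set.Iio 0 := by
          ext t; rw [Set.mem_setOf_eq, Set.mem_preimage, Set.mem_Iio, heq t]
        rw [this]
        exact (isOpen_Iio.preimage hcont).mem_nhds (by simpa using hneg)
      filter_upwards [hU] with t ht
      exact ⟨by constructor <;> intro h' <;> [exact absurd h' (not_lt.mpr ht.le); exact absurd h' (not_lt.mpr hneg.le)], ne_of_lt ht⟩
    · have hU : {t : ℝ | 0 < g i (t • v +ᵥ x₀)} ∈ nhds (0:ℝ) := by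
        have : {t : ℝ | 0 < g i (t • v +ᵥ x₀)} = (fun t : ℝ => t * (g i).linear v + g i x₀) ⁻¹' Set.Ioi 0 := by
          ext t; rw [Set.mem_setOf_eq, Set.mem_preimage, Set.mem_Ioi, heq t]
        rw [this]
        exact (isOpen_Ioi.preimage hcont).mem_nhds (by simpa using hpos)
      filter_upwards [hU] with t ht
      exact ⟨⟨fun _ => hpos, fun _ => ht⟩, ne_of_gt ht⟩
  constructor
  · have h1 := hev.filter_mono (nhdsWithin_le_nhds (s := Set.Ioi (0:ℝ)))
    obtain ⟨t, ht, htpos⟩ := (h1.and self_mem_nhdsWithin).exists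
    refine ⟨t • v +ᵥ x₀, ?_, ht, ?_⟩
    · exact AffineSubspace.vadd_mem_of_mem_direction (Submodule.smul_mem _ t hv) hx
    · rw [affine_apply_smul_vadd, hfl, add_zero]
      exact mul_pos htpos hlv
  · have h1 := hev.filter_mono (nhdsWithin_le_nhds (s := Set.Iio (0:ℝ)))
    obtain ⟨t, ht, htneg⟩ := (h1.and self_mem_nhdsWithin).exists
    refine ⟨t • v +ᵥ x₀, ?_, ht, ?_⟩
    · exact AffineSubspace.vadd_mem_of_mem_direction (Submodule.smul_mem _ t hv) hx
    · rw [affine_apply_smul_vadd, hfl, add_zero]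
      exact mul_neg_of_neg_of_pos htneg hlv

lemma perturb {A : AffineSubspace ℝ (Fin n → ℝ)}
    {g : Fin m → ((Fin n → ℝ) →ᵃ[ℝ] ℝ)} {fl : (Fin n → ℝ) →ᵃ[ℝ] ℝ} {x₀ : Fin n → ℝ}
    (hx : x₀ ∈ A) (hg : ∀ i, g i x₀ ≠ 0) (hfl : fl x₀ = 0)
    {v : Fin n → ℝ} (hv : v ∈ A.direction) (hlv : fl.linear v ≠ 0) :
    (∃ xp ∈ A, (∀ i, (0 < g i xp ↔ 0 < g i x₀) ∧ g i xp ≠ 0) ∧ 0 < fl xp) ∧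
    (∃ xq ∈ A, (∀ i, (0 < g i xq ↔ 0 < g i x₀) ∧ g i xq ≠ 0) ∧ fl xq < 0) := by
  rcases hlv.lt_or_gt with h | h
  · have := perturb_core hx hg hfl (Submodule.neg_mem _ hv)
      (by rw [map_neg]; exact neg_pos.mpr h)
    exact this
  · exact perturb_core hx hg hfl hv h

lemma segment_point {A : AffineSubspace ℝ (Fin n → ℝ)}
    {g : Fin m → ((Fin n → ℝ) →ᵃ[ℝ] ℝ)} {fl : (Fin n → ℝ) →ᵃ[ℝ] ℝ}
    {xp xq : Fin n → ℝ} {σ : Fin m → Bool}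
    (hp : xp ∈ A) (hq : xq ∈ A) (hgp : realizes g xp σ) (hgq : realizes g xq σ)
    (hflp : 0 < fl xp) (hflq : fl xq < 0) :
    ∃ x ∈ A ⊓ zeroSet fl, realizes g x σ := by
  set t₀ : ℝ := fl xp / (fl xp - fl xq) with ht₀
  have hden : 0 < fl xp - fl xq := by linarith
  have h0 : 0 ≤ t₀ := div_nonneg hflp.le hden.le
  have h1 : t₀ ≤ 1 := (div_le_one hden).mpr (by linarith)
  have hline : ∀ (f : (Fin n → ℝ) →ᵃ[ℝ] ℝ),
      f (AffineMap.lineMap xp xq t₀) = t₀ * (f xq - f xp) + f xp := by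
    intro f
    rw [AffineMap.apply_lineMap]
    simp [AffineMap.lineMap_apply, vsub_eq_sub, vadd_eq_add, smul_eq_mul]
  refine ⟨AffineMap.lineMap xp xq t₀, ⟨?_, ?_⟩, ?_⟩
  · exact AffineMap.lineMap_mem t₀ hp hq
  · show fl (AffineMap.lineMap xp xq t₀) = 0
    rw [hline fl, ht₀]
    field_simp
    ring
  · intro i
    have hsp := sign_pres h0 h1 (((hgp i).2.symm.trans (hgq i).2) : (0 < g i xp ↔ 0 < g i xq))
      (hgp i).1 (hgq i).1
    rw [hline (g i)]
    exact ⟨hsp.2, (hgp i).2.trans hsp.1.symm⟩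

def pats (A : Set (Fin n → ℝ)) (f : Fin m → ((Fin n → ℝ) →ᵃ[ℝ] ℝ)) : Set (Fin m → Bool) :=
  {σ | ∃ x ∈ A, realizes f x σ}

lemma realizes_comp_castSucc {f : Fin (m+1) → ((Fin n → ℝ) →ᵃ[ℝ] ℝ)} {x : Fin n → ℝ}
    {σ : Fin (m+1) → Bool} (h : realizes f x σ) :
    realizes (fun i : Fin m => f i.castSucc) x (σ ∘ Fin.castSucc) :=
  fun i => h i.castSucc

lemma upper : ∀ (m d : ℕ) (A : AffineSubspace ℝ (Fin n → ℝ))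
    (f : Fin m → ((Fin n → ℝ) →ᵃ[ℝ] ℝ)),
    Module.finrank ℝ A.direction ≤ d →
    (pats (A : Set (Fin n → ℝ)) f).ncard ≤ ∑ i ∈ range (d + 1), m.choose i := by
  intro m
  induction m with
  | zero =>
      intro d A f _
      rw [sum_choose_zero]
      calc (pats (A : Set (Fin n → ℝ)) f).ncard
          ≤ (Set.univ : Set (Fin 0 → Bool)).ncard :=
            Set.ncard_le_ncard (Set.subset_univ _) (Set.toFinite _)
        _ = 1 := by rw [Set.ncard_univ]; exact Nat.card_unique
  | succ m ih =>
      intro d A f hd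
      set g : Fin m → ((Fin n → ℝ) →ᵃ[ℝ] ℝ) := fun i => f i.castSucc with hg
      set ρ : (Fin (m+1) → Bool) → (Fin m → Bool) := fun σ => σ ∘ Fin.castSucc with hρ
      set P := pats (A : Set (Fin n → ℝ)) f with hP
      set P₁ := {σ ∈ P | σ (Fin.last m) = true} with hP₁
      set P₂ := {σ ∈ P | σ (Fin.last m) = false} with hP₂
      have hsplit : P = P₁ ∪ P₂ := by
        ext σ; rcases Bool.eq_false_or_eq_true (σ (Fin.last m)) with h | h <;>
          simp [hP₁, hP₂, h]
      have hdisj : Disjoint P₁ P₂ := by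
        rw [Set.disjoint_left]
        rintro σ ⟨-, h1⟩ ⟨-, h2⟩
        rw [h1] at h2; exact Bool.noConfusion h2
      have hinj : ∀ (Pb : Set (Fin (m+1) → Bool)) (bb : Bool),
          (∀ σ ∈ Pb, σ (Fin.last m) = bb) → Set.InjOn ρ Pb := by
        intro Pb bb hb σ hσ τ hτ hρστ
        funext k
        induction k using Fin.lastCases with
        | last => rw [hb σ hσ, hb τ hτ]
        | cast i => exact congrFun hρστ i
      have hinj₁ : Set.InjOn ρ P₁ := hinj P₁ true (fun σ hσ => hσ.2)
      have hinj₂ : Set.InjOn ρ P₂ := hinj P₂ false (fun σ hσ => hσ.2)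
      have hQ : ρ '' P₁ ∪ ρ '' P₂ ⊆ pats (A : Set (Fin n → ℝ)) g := by
        rintro σ' (⟨σ, ⟨⟨x, hx, hr⟩, -⟩, rfl⟩ | ⟨σ, ⟨⟨x, hx, hr⟩, -⟩, rfl⟩) <;>
          exact ⟨x, hx, realizes_comp_castSucc hr⟩
      have hcount : P.ncard = (ρ '' P₁ ∪ ρ '' P₂).ncard + (ρ '' P₁ ∩ ρ '' P₂).ncard := by
        rw [hsplit, Set.ncard_union_eq hdisj (Set.toFinite _) (Set.toFinite _),
          ← Set.ncard_image_of_injOn hinj₁, ← Set.ncard_image_of_injOn hinj₂]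
        exact (Set.ncard_union_add_ncard_inter _ _ (Set.toFinite _) (Set.toFinite _)).symm
      have hQbound : (ρ '' P₁ ∪ ρ '' P₂).ncard ≤ ∑ i ∈ range (d + 1), m.choose i :=
        (Set.ncard_le_ncard hQ (Set.toFinite _)).trans (ih d A g hd)
      rcases Set.eq_empty_or_nonempty (ρ '' P₁ ∩ ρ '' P₂) with hB | hB
      · rw [hcount, hB, Set.ncard_empty, add_zero]
        refine hQbound.trans (Finset.sum_le_sum fun i _ => Nat.choose_le_choose i (Nat.le_succ m))
      · -- intersection nonempty: d ≥ 1 and bound via restricted arrangement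
        obtain ⟨σ₀', hσ₀1, hσ₀2⟩ := hB
        obtain ⟨σa, ⟨⟨xp0, hxp0, hra⟩, hlasta⟩, -⟩ := hσ₀1
        obtain ⟨σb, ⟨⟨xq0, hxq0, hrb⟩, hlastb⟩, -⟩ := hσ₀2
        have hflp0 : 0 < f (Fin.last m) xp0 := (hra (Fin.last m)).2.mp hlasta
        have hflq0 : f (Fin.last m) xq0 < 0 := by
          have h1 := (hrb (Fin.last m)).1
          have h2 := (hrb (Fin.last m)).2
          rcases h1.lt_or_gt with h | h
          · exact h
          · rw [h2.mpr h] at hlastb; exact Bool.noConfusion hlastb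
        have hdrop : Module.finrank ℝ (A ⊓ zeroSet (f (Fin.last m))).direction
            < Module.finrank ℝ A.direction :=
          finrank_inf_zeroSet_lt A _ hxp0 hxq0 (by linarith)
        have hd1 : 1 ≤ d := by
          have := hdrop.trans_le hd
          omega
        have hdrop' : Module.finrank ℝ (A ⊓ zeroSet (f (Fin.last m))).direction ≤ d - 1 :=
          Nat.le_sub_one_of_lt (hdrop.trans_le hd)
        have hBsub : ρ '' P₁ ∩ ρ '' P₂
            ⊆ pats ((A ⊓ zeroSet (f (Fin.last m)) : AffineSubspace ℝ (Fin n → ℝ)) :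
                Set (Fin n → ℝ)) g := by
          rintro σ' ⟨⟨σc, ⟨⟨xp, hxp, hrc⟩, hlastc⟩, rfl⟩, ⟨σd, ⟨⟨xq, hxq, hrd⟩, hlastd⟩, hρd⟩⟩
          have hflp : 0 < f (Fin.last m) xp := (hrc (Fin.last m)).2.mp hlastc
          have hflq : f (Fin.last m) xq < 0 := by
            have h1 := (hrd (Fin.last m)).1
            have h2 := (hrd (Fin.last m)).2
            rcases h1.lt_or_gt with h | h
            · exact h
            · rw [h2.mpr h] at hlastd; exact Bool.noConfusion hlastd
          have hgq : realizes g xq (ρ σc) := by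
            rw [show ρ σc = ρ σd from hρd.symm]
            exact realizes_comp_castSucc hrd
          obtain ⟨x, hxmem, hrx⟩ := segment_point hxp hxq (realizes_comp_castSucc hrc) hgq hflp hflq
          exact ⟨x, hxmem, hrx⟩
        have hBbound : (ρ '' P₁ ∩ ρ '' P₂).ncard ≤ ∑ i ∈ range d, m.choose i := by
          have := (Set.ncard_le_ncard hBsub (Set.toFinite _)).trans
            (ih (d-1) (A ⊓ zeroSet (f (Fin.last m))) g hdrop')
          rwa [Nat.sub_add_cancel hd1] at this
        rw [hcount, sum_choose_succ]
        exact Nat.add_le_add hQbound hBbound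

lemma realizes_of_signs {g : Fin m → ((Fin n → ℝ) →ᵃ[ℝ] ℝ)} {x y : Fin n → ℝ}
    {σ : Fin m → Bool} (h : realizes g x σ)
    (hs : ∀ i, (0 < g i y ↔ 0 < g i x) ∧ g i y ≠ 0) : realizes g y σ :=
  fun i => ⟨(hs i).2, (h i).2.trans ((hs i).1).symm⟩

lemma realizes_lastCases {F : Fin (m+1) → ((Fin n → ℝ) →ᵃ[ℝ] ℝ)} {x : Fin n → ℝ}
    {σ' : Fin m → Bool} {b : Bool}
    (h : realizes (fun k : Fin m => F k.castSucc) x σ')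
    (hne : F (Fin.last m) x ≠ 0) (hb : b = true ↔ 0 < F (Fin.last m) x) :
    realizes F x (Fin.lastCases b σ') := by
  intro k
  induction k using Fin.lastCases with
  | last => simpa using ⟨hne, hb⟩
  | cast i => simpa using h i

@[simp] lemma comp_lastCases (σ' : Fin m → Bool) (b : Bool) :
    (Fin.lastCases b σ' : Fin (m+1) → Bool) ∘ Fin.castSucc = σ' := by
  funext i; simp

lemma count_exact (M : ℕ) (f : Fin M → ((Fin n → ℝ) →ᵃ[ℝ] ℝ))
    (H : Fin M → Set (Fin n → ℝ)) (hH : ∀ i, H i = {x | f i x = 0})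
    (GP1 : ∀ s : Finset (Fin M), s.card ≤ n →
      ∃ A : AffineSubspace ℝ (Fin n → ℝ), (A : Set (Fin n → ℝ)) = ⋂ j ∈ s, H j ∧
        (A : Set (Fin n → ℝ)).Nonempty ∧ Module.finrank ℝ A.direction = n - s.card)
    (GP2 : ∀ s : Finset (Fin M), n < s.card → ⋂ j ∈ s, H j = ∅) :
    ∀ (m : ℕ) (ι : Fin m → Fin M), Function.Injective ι →
    ∀ (s : Finset (Fin M)), (∀ k, ι k ∉ s) → s.card ≤ n →
    {σ : Fin m → Bool | ∃ x, x ∈ (⋂ j ∈ s, H j) ∧ realizes (fun k => f (ι k)) x σ}.ncard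
      = ∑ i ∈ range (n - s.card + 1), m.choose i := by
  intro m
  induction m with
  | zero =>
      intro ι hι s hdisj hsc
      obtain ⟨A, hcar, ⟨x, hx⟩, -⟩ := GP1 s hsc
      have : {σ : Fin 0 → Bool | ∃ x, x ∈ (⋂ j ∈ s, H j) ∧ realizes (fun k => f (ι k)) x σ}
          = Set.univ := by
        ext σ
        simp only [Set.mem_setOf_eq, Set.mem_univ, iff_true]
        exact ⟨x, hcar ▸ hx, fun i => i.elim0⟩
      rw [this, Set.ncard_univ, sum_choose_zero, Nat.card_unique]
  | succ m ih =>
      intro ι hι s hdisj hsc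
      set j : Fin M := ι (Fin.last m) with hj
      set ι' : Fin m → Fin M := fun k => ι k.castSucc with hι'def
      have hι'inj : Function.Injective ι' := fun a c h =>
        Fin.castSucc_injective m (hι h)
      set fl : (Fin n → ℝ) →ᵃ[ℝ] ℝ := f j with hfl
      set g : Fin m → ((Fin n → ℝ) →ᵃ[ℝ] ℝ) := fun k => f (ι' k) with hgdef
      rcases eq_or_lt_of_le hsc with heq | hlt
      · -- s.card = n : the intersection is a single point, exactly one pattern
        obtain ⟨A, hcar, ⟨pt, hpt⟩, hrank⟩ := GP1 s hsc
        have hdir : A.direction = ⊥ := by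
          rw [heq] at hrank
          simp only [Nat.sub_self] at hrank
          exact Submodule.finrank_eq_zero.mp hrank
        have hptA : pt ∈ A := hpt
        have huniq : ∀ x ∈ (⋂ j ∈ s, H j), x = pt := by
          intro x hx
          have hxA : x ∈ A := by rw [← SetLike.mem_coe, hcar]; exact hx
          have := AffineSubspace.vsub_mem_direction hxA hptA
          rw [hdir, Submodule.mem_bot, vsub_eq_sub, sub_eq_zero] at this
          exact this
        have hne0 : ∀ k : Fin (m+1), f (ι k) pt ≠ 0 := by
          intro k hk
          have hmem : pt ∈ ⋂ j' ∈ insert (ι k) s, H j' := by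
            rw [Finset.set_biInter_insert]
            exact ⟨by rw [hH]; exact hk, hcar ▸ hpt⟩
          have hcard : n < (insert (ι k) s).card := by
            rw [Finset.card_insert_of_notMem (hdisj k)]; omega
          rw [GP2 _ hcard] at hmem
          exact hmem
        have hset : {σ : Fin (m+1) → Bool | ∃ x, x ∈ (⋂ j ∈ s, H j) ∧
            realizes (fun k => f (ι k)) x σ}
            = {fun k => decide (0 < f (ι k) pt)} := by
          ext σ
          simp only [Set.mem_setOf_eq, Set.mem_singleton_iff]
          constructor
          · rintro ⟨x, hx, hr⟩
            have hxpt := huniq x hx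
            subst hxpt
            funext k
            have h1 := (hr k).2
            by_cases hp : 0 < f (ι k) x
            · rw [h1.mpr hp]; simp [hp]
            · have hfalse : σ k = false := by
                rcases Bool.eq_false_or_eq_true (σ k) with h | h
                · exact absurd (h1.mp h) hp
                · exact h
              rw [hfalse]; simp [hp]
          · rintro rfl
            exact ⟨pt, hcar ▸ hpt, fun k => ⟨hne0 k, by simp⟩⟩
        rw [hset, Set.ncard_singleton, ← heq]
        simp
      · -- s.card < n : recursion
        obtain ⟨A, hcar, ⟨pt, hpt⟩, hrank⟩ := GP1 s hsc
        have hjs : j ∉ s := hdisj (Fin.last m)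
        set s' : Finset (Fin M) := insert j s with hs'
        have hs'card : s'.card = s.card + 1 := Finset.card_insert_of_notMem hjs
        have hs'le : s'.card ≤ n := by omega
        obtain ⟨A', hcar', hA'ne, hrank'⟩ := GP1 s' hs'le
        have hmemA : ∀ x, x ∈ (⋂ j' ∈ s, H j') ↔ x ∈ A := by
          intro x; rw [← SetLike.mem_coe, hcar]
        -- there is a point of A where fl is nonzero
        have hv : ∃ y ∈ A, fl y ≠ 0 := by
          by_contra hcon
          push_neg at hcon
          have hsub : (A : Set (Fin n → ℝ)) ⊆ (A' : Set (Fin n → ℝ)) := by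
            intro x hx
            rw [hcar', hs', Finset.set_biInter_insert]
            exact ⟨by rw [hH]; exact hcon x hx, hcar ▸ hx⟩
          have hle : A ≤ A' := hsub
          have := Submodule.finrank_mono (AffineSubspace.direction_le hle)
          rw [hrank, hrank'] at this
          omega
        -- direction vector transverse to fl through a given point of A
        have hvdir : ∀ x₀ ∈ A, fl x₀ = 0 → ∃ v ∈ A.direction, fl.linear v ≠ 0 := by
          rintro x₀ hx₀ hfl0
          obtain ⟨y, hy, hfy⟩ := hv
          refine ⟨y -ᵥ x₀, AffineSubspace.vsub_mem_direction hy hx₀, ?_⟩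
          rw [AffineMap.linearMap_vsub, hfl0]
          simpa using hfy
        set ρ : (Fin (m+1) → Bool) → (Fin m → Bool) := fun σ => σ ∘ Fin.castSucc with hρ
        set P := {σ : Fin (m+1) → Bool | ∃ x, x ∈ (⋂ j' ∈ s, H j') ∧
          realizes (fun k => f (ι k)) x σ} with hPdef
        set Q := {σ' : Fin m → Bool | ∃ x, x ∈ (⋂ j' ∈ s, H j') ∧
          realizes (fun k => f (ι' k)) x σ'} with hQdef
        set B := {σ' : Fin m → Bool | ∃ x, x ∈ (⋂ j' ∈ s', H j') ∧
          realizes (fun k => f (ι' k)) x σ'} with hBdef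
        set P₁ := {σ ∈ P | σ (Fin.last m) = true} with hP₁
        set P₂ := {σ ∈ P | σ (Fin.last m) = false} with hP₂
        have hsplit : P = P₁ ∪ P₂ := by
          apply Set.Subset.antisymm
          · intro σ hσ
            rcases Bool.eq_false_or_eq_true (σ (Fin.last m)) with h | h
            · exact Or.inl ⟨hσ, h⟩
            · exact Or.inr ⟨hσ, h⟩
          · rintro σ (⟨h, -⟩ | ⟨h, -⟩) <;> exact h
        have hdisj12 : Disjoint P₁ P₂ := by
          rw [Set.disjoint_left]
          rintro σ ⟨-, h1⟩ ⟨-, h2⟩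
          rw [h1] at h2; exact Bool.noConfusion h2
        have hinj : ∀ (Pb : Set (Fin (m+1) → Bool)) (bb : Bool),
            (∀ σ ∈ Pb, σ (Fin.last m) = bb) → Set.InjOn ρ Pb := by
          intro Pb bb hb σ hσ τ hτ hρστ
          funext k
          induction k using Fin.lastCases with
          | last => rw [hb σ hσ, hb τ hτ]
          | cast i => exact congrFun hρστ i
        have hinj₁ : Set.InjOn ρ P₁ := hinj P₁ true (fun σ hσ => hσ.2)
        have hinj₂ : Set.InjOn ρ P₂ := hinj P₂ false (fun σ hσ => hσ.2)
        have hcount : P.ncard = (ρ '' P₁ ∪ ρ '' P₂).ncard + (ρ '' P₁ ∩ ρ '' P₂).ncard := by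
          rw [hsplit, Set.ncard_union_eq hdisj12 (Set.toFinite _) (Set.toFinite _),
            ← Set.ncard_image_of_injOn hinj₁, ← Set.ncard_image_of_injOn hinj₂]
          exact (Set.ncard_union_add_ncard_inter _ _ (Set.toFinite _) (Set.toFinite _)).symm
        -- the union is exactly Q
        have hunion : ρ '' P₁ ∪ ρ '' P₂ = Q := by
          apply Set.Subset.antisymm
          · rintro σ' (⟨σ, ⟨⟨x, hx, hr⟩, -⟩, rfl⟩ | ⟨σ, ⟨⟨x, hx, hr⟩, -⟩, rfl⟩) <;>
              exact ⟨x, hx, realizes_comp_castSucc hr⟩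
          · rintro σ' ⟨x, hx, hr⟩
            by_cases hfx : fl x = 0
            · -- perturb off the hyperplane
              obtain ⟨v, hvdir', hlv⟩ := hvdir x ((hmemA x).mp hx) hfx
              obtain ⟨⟨xp, hxp, hsp, hflp⟩, -⟩ :=
                perturb ((hmemA x).mp hx) (fun i => (hr i).1) hfx hvdir' hlv
              left
              refine ⟨Fin.lastCases true σ', ⟨⟨xp, (hmemA xp).mpr hxp, ?_⟩, by simp⟩,
                comp_lastCases σ' true⟩
              exact realizes_lastCases (realizes_of_signs hr hsp) (ne_of_gt hflp)
                (by simpa using hflp)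
            · rcases lt_or_gt_of_ne hfx with hneg | hpos
              · right
                refine ⟨Fin.lastCases false σ', ⟨⟨x, hx, ?_⟩, by simp⟩,
                  comp_lastCases σ' false⟩
                exact realizes_lastCases hr hfx
                  (by simp only [Bool.false_eq_true, false_iff]; exact not_lt.mpr hneg.le)
              · left
                refine ⟨Fin.lastCases true σ', ⟨⟨x, hx, ?_⟩, by simp⟩,
                  comp_lastCases σ' true⟩
                exact realizes_lastCases hr hfx (by simpa using hpos)
        -- the intersection is exactly B
        have hinter : ρ '' P₁ ∩ ρ '' P₂ = B := by
          apply Set.Subset.antisymm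
          · rintro σ' ⟨⟨σc, ⟨⟨xp, hxp, hrc⟩, hlastc⟩, rfl⟩, ⟨σd, ⟨⟨xq, hxq, hrd⟩, hlastd⟩, hρd⟩⟩
            have hflp : 0 < fl xp := (hrc (Fin.last m)).2.mp hlastc
            have hflq : fl xq < 0 := by
              rcases lt_or_gt_of_ne ((hrd (Fin.last m)).1) with h | h
              · exact h
              · rw [(hrd (Fin.last m)).2.mpr h] at hlastd; exact Bool.noConfusion hlastd
            have hgq : realizes (fun k => f (ι' k)) xq (ρ σc) := by
              rw [show ρ σc = ρ σd from hρd.symm]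
              exact realizes_comp_castSucc hrd
            obtain ⟨x, ⟨hxA, hxZ⟩, hrx⟩ := segment_point ((hmemA xp).mp hxp)
              ((hmemA xq).mp hxq) (realizes_comp_castSucc hrc) hgq hflp hflq
            refine ⟨x, ?_, hrx⟩
            rw [hs', Finset.set_biInter_insert]
            exact ⟨by rw [hH]; exact mem_zeroSet.mp hxZ, (hmemA x).mpr hxA⟩
          · rintro σ' ⟨x₀, hx₀, hr⟩
            have hx₀s : x₀ ∈ ⋂ j' ∈ s, H j' := by
              have hsub : (⋂ j' ∈ s', H j') ⊆ ⋂ j' ∈ s, H j' := by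
                rw [hs', Finset.set_biInter_insert]; exact Set.inter_subset_right
              exact hsub hx₀
            have hx₀A : x₀ ∈ A := (hmemA x₀).mp hx₀s
            have hfl0 : fl x₀ = 0 := by
              have hmem : x₀ ∈ H j := by
                rw [hs', Finset.set_biInter_insert] at hx₀; exact hx₀.1
              rw [hH] at hmem; exact hmem
            obtain ⟨v, hvd, hlv⟩ := hvdir x₀ hx₀A hfl0
            obtain ⟨⟨xp, hxp, hsp, hflp⟩, ⟨xq, hxq, hsq, hflq⟩⟩ :=
              perturb hx₀A (fun i => (hr i).1) hfl0 hvd hlv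
            constructor
            · exact ⟨Fin.lastCases true σ', ⟨⟨xp, (hmemA xp).mpr hxp,
                realizes_lastCases (realizes_of_signs hr hsp) (ne_of_gt hflp)
                  (by simpa using hflp)⟩, by simp⟩, comp_lastCases σ' true⟩
            · exact ⟨Fin.lastCases false σ', ⟨⟨xq, (hmemA xq).mpr hxq,
                realizes_lastCases (realizes_of_signs hr hsq) (ne_of_lt hflq)
                  (by simp only [Bool.false_eq_true, false_iff]; exact not_lt.mpr hflq.le)⟩,
                by simp⟩, comp_lastCases σ' false⟩
        have hQval : Q.ncard = ∑ i ∈ range (n - s.card + 1), m.choose i :=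
          ih ι' hι'inj s (fun k => hdisj k.castSucc) hsc
        have hdisj' : ∀ k : Fin m, ι' k ∉ s' := by
          intro k hk
          rw [hs', Finset.mem_insert] at hk
          rcases hk with hk | hk
          · exact (Fin.castSucc_lt_last k).ne (hι hk)
          · exact hdisj k.castSucc hk
        have hBval : B.ncard = ∑ i ∈ range (n - s.card), m.choose i := by
          have hB := ih ι' hι'inj s' hdisj' hs'le
          rw [hs'card] at hB
          have harith : n - (s.card + 1) + 1 = n - s.card := by omega
          rwa [harith] at hB
        rw [hcount, hunion, hinter, hQval, hBval, sum_choose_succ]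

lemma region_card (M : ℕ) (f : Fin M → ((Fin n → ℝ) →ᵃ[ℝ] ℝ))
    (H : Fin M → Set (Fin n → ℝ)) (hH : ∀ i, H i = {x | f i x = 0})
    (S : Set (Fin n → ℝ)) (hS : S = (⋃ i, H i)ᶜ)
    (R : Set (Set (Fin n → ℝ))) (hR : R = {C | ∃ x ∈ S, C = connectedComponentIn S x}) :
    R.ncard = {σ : Fin M → Bool | ∃ x, realizes f x σ}.ncard := by
  have hmemS : ∀ x, x ∈ S ↔ ∀ i, f i x ≠ 0 := by
    intro x
    rw [hS]
    simp only [Set.mem_compl_iff, Set.mem_iUnion, not_exists, hH, Set.mem_setOf_eq]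
  set cell : (Fin M → Bool) → Set (Fin n → ℝ) :=
    fun σ => ⋂ i, (f i) ⁻¹' (if σ i = true then Set.Ioi (0:ℝ) else Set.Iio 0) with hcell
  have hcellmem : ∀ σ x, x ∈ cell σ ↔ ∀ i, x ∈ (f i) ⁻¹' (if σ i = true then Set.Ioi (0:ℝ) else Set.Iio 0) := by
    intro σ x; rw [hcell]; exact Set.mem_iInter
  have hreal_cell : ∀ σ x, realizes f x σ ↔ x ∈ cell σ := by
    intro σ x
    rw [hcellmem]
    constructor
    · intro hr i
      rcases Bool.eq_false_or_eq_true (σ i) with h | h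
      · simp only [h, if_true, Set.mem_preimage, Set.mem_Ioi]
        exact (hr i).2.mp h
      · simp only [h, Bool.false_eq_true, if_false, Set.mem_preimage, Set.mem_Iio]
        rcases lt_or_gt_of_ne ((hr i).1) with hlt | hgt
        · exact hlt
        · rw [(hr i).2.mpr hgt] at h; exact absurd h (by simp)
    · intro hx i
      have := hx i
      rcases Bool.eq_false_or_eq_true (σ i) with h | h
      · rw [if_pos h] at this
        rw [Set.mem_preimage, Set.mem_Ioi] at this
        exact ⟨ne_of_gt this, by simp [h, this]⟩
      · rw [if_neg (by simp [h])] at this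
        rw [Set.mem_preimage, Set.mem_Iio] at this
        refine ⟨ne_of_lt this, ?_⟩
        rw [h]
        simp only [Bool.false_eq_true, false_iff]
        exact not_lt.mpr this.le
  have hconvex : ∀ σ, Convex ℝ (cell σ) := by
    intro σ
    rw [hcell]
    refine convex_iInter fun i => Convex.affine_preimage (f i) ?_
    split_ifs
    · exact convex_Ioi 0
    · exact convex_Iio 0
  have hcellS : ∀ σ, cell σ ⊆ S := by
    intro σ x hx
    exact (hmemS x).mpr fun i => ((hreal_cell σ x).mpr hx i).1
  set Φ : (Fin M → Bool) → Set (Fin n → ℝ) :=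
    fun σ => ⋃ x ∈ cell σ, connectedComponentIn S x with hΦdef
  have hΦ : ∀ σ, ∀ x ∈ cell σ, Φ σ = connectedComponentIn S x := by
    intro σ x hx
    have hsub : cell σ ⊆ connectedComponentIn S x :=
      IsPreconnected.subset_connectedComponentIn ((hconvex σ).isPreconnected) hx (hcellS σ)
    apply Set.Subset.antisymm
    · refine Set.iUnion₂_subset fun y hy => ?_
      rw [← connectedComponentIn_eq (hsub hy)]
    · exact Set.subset_iUnion₂ (s := fun x _ => connectedComponentIn S x) x hx
  have key : ∀ x ∈ S, ∀ a ∈ connectedComponentIn S x, ∀ b ∈ connectedComponentIn S x,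
      ∀ i, f i a < 0 → 0 < f i b → False := by
    intro x hx a ha b hb i hfa hfb
    have hpre : IsPreconnected (f i '' connectedComponentIn S x) :=
      (isPreconnected_connectedComponentIn).image _
        ((AffineMap.continuous_of_finiteDimensional (f i)).continuousOn)
    have h0 : (0:ℝ) ∈ f i '' connectedComponentIn S x := by
      refine IsPreconnected.Icc_subset hpre ⟨a, ha, rfl⟩ ⟨b, hb, rfl⟩ ?_
      exact ⟨hfa.le, hfb.le⟩
    obtain ⟨z, hz, hz0⟩ := h0
    exact ((hmemS z).mp (connectedComponentIn_subset S x hz) i) hz0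
  have hconst : ∀ x ∈ S, ∀ y ∈ connectedComponentIn S x, ∀ i, (0 < f i y ↔ 0 < f i x) := by
    intro x hx y hy i
    have hyS : y ∈ S := connectedComponentIn_subset S x hy
    have hxmem : x ∈ connectedComponentIn S x := mem_connectedComponentIn hx
    constructor
    · intro h
      rcases lt_or_gt_of_ne ((hmemS x).mp hx i) with hneg | hpos
      · exact absurd (key x hx x hxmem y hy i hneg h) not_false
      · exact hpos
    · intro h
      rcases lt_or_gt_of_ne ((hmemS y).mp hyS i) with hneg | hpos
      · exact absurd (key x hx y hy x hxmem i hneg h) not_false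
      · exact hpos
  set P₀ := {σ : Fin M → Bool | ∃ x, realizes f x σ} with hP₀
  have himg : Φ '' P₀ = R := by
    apply Set.Subset.antisymm
    · rintro C ⟨σ, ⟨x, hr⟩, rfl⟩
      have hx : x ∈ cell σ := (hreal_cell σ x).mp hr
      rw [hR, Set.mem_setOf_eq]
      exact ⟨x, hcellS σ hx, hΦ σ x hx⟩
    · intro C hC
      rw [hR, Set.mem_setOf_eq] at hC
      obtain ⟨x, hx, rfl⟩ := hC
      set σ : Fin M → Bool := fun i => decide (0 < f i x) with hσ
      have hr : realizes f x σ := fun i => ⟨(hmemS x).mp hx i, by simp [hσ]⟩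
      exact ⟨σ, ⟨x, hr⟩, hΦ σ x ((hreal_cell σ x).mp hr)⟩
  have hinjΦ : Set.InjOn Φ P₀ := by
    rintro σ ⟨x, hrx⟩ τ ⟨y, hry⟩ hΦστ
    have hx : x ∈ cell σ := (hreal_cell σ x).mp hrx
    have hy : y ∈ cell τ := (hreal_cell τ y).mp hry
    have hxS : x ∈ S := hcellS σ hx
    have hyS : y ∈ S := hcellS τ hy
    have hcomp : connectedComponentIn S x = connectedComponentIn S y := by
      rw [← hΦ σ x hx, ← hΦ τ y hy, hΦστ]
    have hymem : y ∈ connectedComponentIn S x := by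
      rw [hcomp]; exact mem_connectedComponentIn hyS
    funext i
    have h1 : σ i = true ↔ 0 < f i x := (hrx i).2
    have h2 : τ i = true ↔ 0 < f i y := (hry i).2
    have h3 : (0 < f i y ↔ 0 < f i x) := hconst x hxS y hymem i
    have h4 : σ i = true ↔ τ i = true := by rw [h1, h2, h3]
    exact Bool.eq_iff_iff.mpr h4
  rw [← himg, Set.ncard_image_of_injOn hinjΦ]

/-- The affine functional `x ↦ w ⬝ᵥ x + b`. -/
noncomputable def affOf {n : ℕ} (wv : Fin n → ℝ) (bv : ℝ) : (Fin n → ℝ) →ᵃ[ℝ] ℝ where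
  toFun := fun x => dotProduct wv x + bv
  linear :=
    { toFun := fun x => dotProduct wv x
      map_add' := fun x y => by simp [dotProduct_add]
      map_smul' := fun c x => by simp [dotProduct_smul] }
  map_vadd' := fun p v => by
    simp only [vadd_eq_add, dotProduct_add, LinearMap.coe_mk, AddHom.coe_mk]
    ring

@[simp] lemma affOf_apply {n : ℕ} (wv : Fin n → ℝ) (bv : ℝ) (x : Fin n → ℝ) :
    affOf wv bv x = dotProduct wv x + bv := rfl

end Stmt2Aux

open Matrix in
/-- An arrangement of `M` distinct hyperplanes in `ℝⁿ` has at most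
`∑_{i=0}^n C(M,i)` regions, with equality when the hyperplanes are in general
position. -/
theorem stmt_2 (n M : ℕ) (w : Fin M → Fin n → ℝ) (b : Fin M → ℝ)
    (hw : ∀ i, w i ≠ 0)
    (H : Fin M → Set (Fin n → ℝ)) (hH : ∀ i, H i = {x | w i ⬝ᵥ x + b i = 0})
    (hdist : Function.Injective H)
    (S : Set (Fin n → ℝ)) (hS : S = (⋃ i, H i)ᶜ)
    (R : Set (Set (Fin n → ℝ)))
    (hR : R = {C | ∃ x ∈ S, C = connectedComponentIn S x}) :
    R.ncard ≤ ∑ i ∈ Finset.range (n + 1), M.choose i ∧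
    ((∀ s : Finset (Fin M), s.card ≤ n →
        ∃ A : AffineSubspace ℝ (Fin n → ℝ),
          (A : Set (Fin n → ℝ)) = ⋂ j ∈ s, H j ∧
          (A : Set (Fin n → ℝ)).Nonempty ∧
          Module.finrank ℝ A.direction = n - s.card) →
      (∀ s : Finset (Fin M), n < s.card → ⋂ j ∈ s, H j = ∅) →
      R.ncard = ∑ i ∈ Finset.range (n + 1), M.choose i) := by
  classical
  set f : Fin M → ((Fin n → ℝ) →ᵃ[ℝ] ℝ) := fun i => Stmt2Aux.affOf (w i) (b i) with hf
  have hH' : ∀ i, H i = {x | f i x = 0} := by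
    intro i; rw [hH i]; ext x; simp [hf]
  have hcard : R.ncard = {σ : Fin M → Bool | ∃ x, Stmt2Aux.realizes f x σ}.ncard :=
    Stmt2Aux.region_card M f H hH' S hS R hR
  have htopdir : Module.finrank ℝ (⊤ : AffineSubspace ℝ (Fin n → ℝ)).direction ≤ n := by
    rw [AffineSubspace.direction_top]
    rw [finrank_top ℝ (Fin n → ℝ), Module.finrank_pi ℝ, Fintype.card_fin]
  have hpatseq : Stmt2Aux.pats ((⊤ : AffineSubspace ℝ (Fin n → ℝ)) : Set (Fin n → ℝ)) f
      = {σ : Fin M → Bool | ∃ x, Stmt2Aux.realizes f x σ} := by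
    ext σ
    simp [Stmt2Aux.pats]
  constructor
  · rw [hcard, ← hpatseq]
    exact Stmt2Aux.upper M n ⊤ f htopdir
  · intro GP1 GP2
    have := Stmt2Aux.count_exact M f H hH' GP1 GP2 M id Function.injective_id ∅
      (by simp) (by simp)
    simp only [Finset.card_empty, Nat.sub_zero, id_eq] at this
    rw [hcard]
    rw [← this]
    congr 1
    ext σ
    simp
end

section
/- Let w_1, w_2 ∈ ℝⁿ \ {0}, b_1, b_2 ∈ ℝ, and let D_1, D_2 ⊆ ℝⁿ be disjoint finite sets with D_1 ⊆ {x : w_1ᵀx + b_1 > 0 and w_2ᵀx + b_2 ≤ 0} and D_2 ⊆ {x : w_1ᵀx + b_1 > 0 and w_2ᵀx + b_2 > 0}. Let f : D_1 ∪ D_2 → ℝ be a function that agrees on D_1 with some affine function and agrees on D_2 with some (possibly different) affine function. Then for every m ≥ 2(n+1) there exist v_1,…,v_m ∈ ℝⁿ, c_1,…,c_m ∈ ℝ and α_1,…,α_m ∈ ℝ such that Σ_{j=1}^m α_j σ(v_jᵀx + c_j) = f(x) for all x ∈ D_1 ∪ D_2. -/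
open Matrix in
/-- A function on two finite data sets `D₁ ⊆ l₁⁺ ∩ l₂⁰`,
`D₂ ⊆ l₁⁺ ∩ l₂⁺` that is affine on each of them can be interpolated by a three-layer
ReLU network with `m ≥ 2(n+1)` hidden units. -/
theorem stmt_4 (n : ℕ) (w₁ w₂ : Fin n → ℝ) (hw₁ : w₁ ≠ 0) (hw₂ : w₂ ≠ 0)
    (b₁ b₂ : ℝ) (D₁ D₂ : Set (Fin n → ℝ)) (hfin₁ : D₁.Finite) (hfin₂ : D₂.Finite)
    (hdisj : Disjoint D₁ D₂)
    (hD₁ : ∀ x ∈ D₁, 0 < w₁ ⬝ᵥ x + b₁ ∧ w₂ ⬝ᵥ x + b₂ ≤ 0)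
    (hD₂ : ∀ x ∈ D₂, 0 < w₁ ⬝ᵥ x + b₁ ∧ 0 < w₂ ⬝ᵥ x + b₂)
    (f : (Fin n → ℝ) → ℝ)
    (haff₁ : ∃ (u : Fin n → ℝ) (d : ℝ), ∀ x ∈ D₁, f x = u ⬝ᵥ x + d)
    (haff₂ : ∃ (u : Fin n → ℝ) (d : ℝ), ∀ x ∈ D₂, f x = u ⬝ᵥ x + d)
    (m : ℕ) (hm : 2 * (n + 1) ≤ m) :
    ∃ (v : Fin m → Fin n → ℝ) (c : Fin m → ℝ) (α : Fin m → ℝ),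
      ∀ x ∈ D₁ ∪ D₂, ∑ j, α j * max 0 (v j ⬝ᵥ x + c j) = f x := by
  obtain ⟨u₁, d₁, h1⟩ := haff₁
  obtain ⟨u₂, d₂, h2⟩ := haff₂
  -- n ≥ 1
  have hn : 1 ≤ n := by
    by_contra h
    interval_cases n
    exact hw₁ (funext fun i => i.elim0)
  have hm4 : 4 ≤ m := by omega
  have hD : (D₁ ∪ D₂).Finite := hfin₁.union hfin₂
  -- ℓ₁ > 0 on the union
  have hℓ₁ : ∀ x ∈ D₁ ∪ D₂, 0 < w₁ ⬝ᵥ x + b₁ := by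
    rintro x (hx | hx)
    exacts [(hD₁ x hx).1, (hD₂ x hx).1]
  -- choose δ > 0 below ℓ₂ on D₂
  obtain ⟨δ, hδpos, hδ⟩ : ∃ δ : ℝ, 0 < δ ∧ ∀ x ∈ D₂, δ < w₂ ⬝ᵥ x + b₂ := by
    rcases D₂.eq_empty_or_nonempty with h | h
    · exact ⟨1, one_pos, by simp [h]⟩
    · have hS : hfin₂.toFinset.Nonempty := by rwa [Set.Finite.toFinset_nonempty]
      have hpos : 0 < hfin₂.toFinset.inf' hS (fun x => w₂ ⬝ᵥ x + b₂) := by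
        rw [Finset.lt_inf'_iff]
        intro x hx
        exact (hD₂ x (hfin₂.mem_toFinset.mp hx)).2
      refine ⟨(hfin₂.toFinset.inf' hS fun x => w₂ ⬝ᵥ x + b₂) / 2, by linarith, fun x hx => ?_⟩
      have := Finset.inf'_le (fun y => w₂ ⬝ᵥ y + b₂) (hfin₂.mem_toFinset.mpr hx)
      linarith
  -- choose lam making first ReLU argument nonneg on the union
  obtain ⟨lam, hlam⟩ : ∃ lam : ℝ,
      ∀ x ∈ D₁ ∪ D₂, 0 ≤ (u₁ ⬝ᵥ x + d₁) + lam * (w₁ ⬝ᵥ x + b₁) := by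
    have hev : ∀ᶠ lam : ℝ in Filter.atTop,
        ∀ x ∈ D₁ ∪ D₂, 0 ≤ (u₁ ⬝ᵥ x + d₁) + lam * (w₁ ⬝ᵥ x + b₁) := by
      rw [Filter.eventually_all_finite hD]
      intro x hx
      have : Filter.Tendsto (fun lam : ℝ => (u₁ ⬝ᵥ x + d₁) + lam * (w₁ ⬝ᵥ x + b₁))
          Filter.atTop Filter.atTop :=
        Filter.tendsto_atTop_add_const_left _ _
          (Filter.Tendsto.atTop_mul_const (hℓ₁ x hx) Filter.tendsto_id)
      exact this.eventually_ge_atTop 0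
    exact hev.exists
  -- choose μ
  obtain ⟨μ, hμ⟩ : ∃ μ : ℝ,
      (∀ x ∈ D₂, 0 ≤ ((u₂ - u₁) ⬝ᵥ x + (d₂ - d₁)) + μ * (w₂ ⬝ᵥ x + (b₂ - δ))) ∧
      (∀ x ∈ D₁, ((u₂ - u₁) ⬝ᵥ x + (d₂ - d₁)) + μ * (w₂ ⬝ᵥ x + (b₂ - δ)) ≤ 0) := by
    have hev₂ : ∀ᶠ μ : ℝ in Filter.atTop,
        ∀ x ∈ D₂, 0 ≤ ((u₂ - u₁) ⬝ᵥ x + (d₂ - d₁)) + μ * (w₂ ⬝ᵥ x + (b₂ - δ)) := by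
      rw [Filter.eventually_all_finite hfin₂]
      intro x hx
      have hp : 0 < w₂ ⬝ᵥ x + (b₂ - δ) := by have := hδ x hx; linarith
      have : Filter.Tendsto
          (fun μ : ℝ => ((u₂ - u₁) ⬝ᵥ x + (d₂ - d₁)) + μ * (w₂ ⬝ᵥ x + (b₂ - δ)))
          Filter.atTop Filter.atTop :=
        Filter.tendsto_atTop_add_const_left _ _
          (Filter.Tendsto.atTop_mul_const hp Filter.tendsto_id)
      exact this.eventually_ge_atTop 0
    have hev₁ : ∀ᶠ μ : ℝ in Filter.atTop,
        ∀ x ∈ D₁, ((u₂ - u₁) ⬝ᵥ x + (d₂ - d₁)) + μ * (w₂ ⬝ᵥ x + (b₂ - δ)) ≤ 0 := by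
      rw [Filter.eventually_all_finite hfin₁]
      intro x hx
      have hneg : w₂ ⬝ᵥ x + (b₂ - δ) < 0 := by have := (hD₁ x hx).2; linarith
      have : Filter.Tendsto
          (fun μ : ℝ => ((u₂ - u₁) ⬝ᵥ x + (d₂ - d₁)) + μ * (w₂ ⬝ᵥ x + (b₂ - δ)))
          Filter.atTop Filter.atBot :=
        Filter.tendsto_atBot_add_const_left _ _
          (Filter.Tendsto.atTop_mul_const_of_neg hneg Filter.tendsto_id)
      exact this.eventually_le_atBot 0
    exact (hev₂.and hev₁).exists
  -- define the network
  refine ⟨fun j => if j.1 = 0 then u₁ + lam • w₁ else if j.1 = 1 then w₁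
      else if j.1 = 2 then (u₂ - u₁) + μ • w₂ else if j.1 = 3 then w₂ else 0,
    fun j => if j.1 = 0 then d₁ + lam * b₁ else if j.1 = 1 then b₁
      else if j.1 = 2 then (d₂ - d₁) + μ * (b₂ - δ) else if j.1 = 3 then b₂ - δ else 0,
    fun j => if j.1 = 0 then 1 else if j.1 = 1 then -lam
      else if j.1 = 2 then 1 else if j.1 = 3 then -μ else 0, ?_⟩
  intro x hx
  set F : Fin m → ℝ := fun j =>
    (if j.1 = 0 then (1:ℝ) else if j.1 = 1 then -lam
      else if j.1 = 2 then 1 else if j.1 = 3 then -μ else 0) *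
    max 0 ((if j.1 = 0 then u₁ + lam • w₁ else if j.1 = 1 then w₁
      else if j.1 = 2 then (u₂ - u₁) + μ • w₂ else if j.1 = 3 then w₂ else 0) ⬝ᵥ x +
      (if j.1 = 0 then d₁ + lam * b₁ else if j.1 = 1 then b₁
        else if j.1 = 2 then (d₂ - d₁) + μ * (b₂ - δ) else if j.1 = 3 then b₂ - δ else 0))
    with hF
  show ∑ j, F j = f x
  have j0 : Fin m := ⟨0, by omega⟩
  have hsub : ∑ j, F j =
      ∑ j ∈ ({⟨0, by omega⟩, ⟨1, by omega⟩, ⟨2, by omega⟩, ⟨3, by omega⟩} : Finset (Fin m)),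
        F j := by
    refine (Finset.sum_subset (Finset.subset_univ _) ?_).symm
    intro j _ hj
    simp only [Finset.mem_insert, Finset.mem_singleton, Fin.ext_iff] at hj
    push_neg at hj
    simp only [hF]
    rw [if_neg hj.1, if_neg hj.2.1, if_neg hj.2.2.1, if_neg hj.2.2.2, zero_mul]
  rw [hsub]
  have hne : ∀ (a b : ℕ) (ha : a < m) (hb : b < m), a ≠ b →
      (⟨a, ha⟩ : Fin m) ≠ ⟨b, hb⟩ := fun a b ha hb h => by simpa [Fin.ext_iff] using h
  rw [Finset.sum_insert (by simp [Fin.ext_iff]), Finset.sum_insert (by simp [Fin.ext_iff]),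
    Finset.sum_insert (by simp [Fin.ext_iff]), Finset.sum_singleton]
  simp only [hF, add_dotProduct, smul_dotProduct, sub_dotProduct,
    smul_eq_mul, if_true, reduceIte]
  norm_num
  -- now compute the four max values
  have e1 : max 0 ((u₁ ⬝ᵥ x + lam * (w₁ ⬝ᵥ x)) + (d₁ + lam * b₁)) =
      (u₁ ⬝ᵥ x + d₁) + lam * (w₁ ⬝ᵥ x + b₁) := by
    rw [max_eq_right]; · ring
    · have := hlam x hx; linarith [hlam x hx]
  have e2 : max 0 (w₁ ⬝ᵥ x + b₁) = w₁ ⬝ᵥ x + b₁ := max_eq_right (le_of_lt (hℓ₁ x hx))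
  rcases hx with hx | hx
  · -- x ∈ D₁ : last two units vanish
    have e3 : max 0 (((u₂ ⬝ᵥ x - u₁ ⬝ᵥ x) + μ * (w₂ ⬝ᵥ x)) + ((d₂ - d₁) + μ * (b₂ - δ))) = 0 := by
      rw [max_eq_left]
      have := hμ.2 x hx
      simp only [sub_dotProduct] at this
      linarith
    have e4 : max 0 (w₂ ⬝ᵥ x + (b₂ - δ)) = 0 := by
      rw [max_eq_left]
      have := (hD₁ x hx).2
      linarith
    rw [e1, e2, e3, e4, h1 x hx]
    ring
  · have e3 : max 0 (((u₂ ⬝ᵥ x - u₁ ⬝ᵥ x) + μ * (w₂ ⬝ᵥ x)) + ((d₂ - d₁) + μ * (b₂ - δ))) =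
        ((u₂ ⬝ᵥ x - u₁ ⬝ᵥ x) + μ * (w₂ ⬝ᵥ x)) + ((d₂ - d₁) + μ * (b₂ - δ)) := by
      rw [max_eq_right]
      have := hμ.1 x hx
      simp only [sub_dotProduct] at this
      linarith
    have e4 : max 0 (w₂ ⬝ᵥ x + (b₂ - δ)) = w₂ ⬝ᵥ x + (b₂ - δ) := by
      rw [max_eq_right]
      have := hδ x hx
      linarith
    rw [e1, e2, e3, e4, h2 x hx]
    ring
end

section
/- For every n ≥ 2 and every m ≥ 1 there exist m hyperplanes in ℝⁿ (given by pairs (w_i, b_i) with w_i ≠ 0) and m pairwise distinct nonempty regions Ω_1,…,Ω_m of their arrangement such that Ω_1,…,Ω_m are distinguishable. Consequently, any m finite sets D_1,…,D_m with D_i ⊆ Ω_i for each i are distinguishable. -/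
open Matrix

/-- Sets `D 1, …, D k ⊆ ℝⁿ` are *distinguishable* if there are an ordering of them
(a permutation `π`) and hyperplanes `(w ν, b ν)` such that each `D (π ν)` lies
strictly on the positive side of the `ν`-th hyperplane while all earlier sets
`D (π μ)`, `μ < ν`, lie on its nonpositive side. -/
def Distinguishable {n k : ℕ} (D : Fin k → Set (Fin n → ℝ)) : Prop :=
  ∃ (π : Equiv.Perm (Fin k)) (w : Fin k → Fin n → ℝ) (b : Fin k → ℝ),
    (∀ ν, w ν ≠ 0) ∧
    (∀ ν : Fin k, ∀ x ∈ D (π ν), 0 < w ν ⬝ᵥ x + b ν) ∧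
    (∀ μ ν : Fin k, μ < ν → ∀ x ∈ D (π μ), w ν ⬝ᵥ x + b ν ≤ 0)

lemma distinguishable_mono {n k : ℕ} {D E : Fin k → Set (Fin n → ℝ)}
    (h : Distinguishable E) (hDE : ∀ i, D i ⊆ E i) : Distinguishable D := by
  obtain ⟨π, w, b, hw, h1, h2⟩ := h
  exact ⟨π, w, b, hw, fun ν x hx => h1 ν x (hDE _ hx),
    fun μ ν hμν x hx => h2 μ ν hμν x (hDE _ hx)⟩

/-- For every `n ≥ 2` and `m ≥ 1` there is an arrangement of `m`
hyperplanes in `ℝⁿ` having `m` pairwise distinct nonempty distinguishable regions;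
consequently any finite sets contained in those regions are distinguishable. -/
theorem stmt_5 (n m : ℕ) (hn : 2 ≤ n) (hm : 1 ≤ m) :
    ∃ (w : Fin m → Fin n → ℝ) (b : Fin m → ℝ),
      (∀ i, w i ≠ 0) ∧
      ∃ Ω : Fin m → Set (Fin n → ℝ),
        Function.Injective Ω ∧
        (∀ i, (Ω i).Nonempty) ∧
        (∀ i, ∃ x ∈ {y | ∀ j, w j ⬝ᵥ y + b j ≠ 0},
          Ω i = connectedComponentIn {y | ∀ j, w j ⬝ᵥ y + b j ≠ 0} x) ∧
        Distinguishable Ω ∧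
        (∀ D : Fin m → Set (Fin n → ℝ),
          (∀ i, (D i).Finite) → (∀ i, D i ⊆ Ω i) → Distinguishable D) := by
  have hn0 : 0 < n := by omega
  set z : Fin n := ⟨0, hn0⟩ with hz
  set w : Fin m → Fin n → ℝ := fun _ => Pi.single z 1 with hwdef
  set b : Fin m → ℝ := fun i => -(i : ℕ) with hbdef
  have hwd : ∀ (i : Fin m) (y : Fin n → ℝ), w i ⬝ᵥ y + b i = y z - (i : ℕ) := by
    intro i y
    simp [hwdef, hbdef, single_dotProduct, sub_eq_add_neg]
  set S : Set (Fin n → ℝ) := {y | ∀ j, w j ⬝ᵥ y + b j ≠ 0} with hSdef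
  have hSmem : ∀ y, y ∈ S ↔ ∀ j : Fin m, y z ≠ (j : ℕ) := by
    intro y
    constructor
    · intro h j; have := h j; rw [hwd] at this; intro hc; exact this (by rw [hc]; ring)
    · intro h j; rw [hwd]; intro hc; exact h j (by linarith)
  -- the regions
  set Ω : Fin m → Set (Fin n → ℝ) :=
    fun i => {y | ((i : ℕ) : ℝ) < y z ∧ ((i : ℕ) + 1 < m → y z < (i : ℕ) + 1)} with hΩdef
  -- base points
  set p : Fin m → Fin n → ℝ := fun i _ => (i : ℕ) + 1/2 with hpdef
  have hpz : ∀ i, (p i) z = (i : ℕ) + 1/2 := fun i => rfl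
  have hpΩ : ∀ i, p i ∈ Ω i := by
    intro i
    refine ⟨by rw [hpz]; linarith, fun hi => ?_⟩
    rw [hpz]; linarith
  have hΩS : ∀ i, Ω i ⊆ S := by
    intro i y hy
    rw [hSmem]
    intro j hc
    obtain ⟨h1, h2⟩ := hy
    rw [hc] at h1
    have hij : (i : ℕ) < (j : ℕ) := by exact_mod_cast h1
    have hjm : (j : ℕ) < m := j.isLt
    have := h2 (by omega)
    rw [hc] at this
    have : (j : ℕ) < (i : ℕ) + 1 := by exact_mod_cast this
    omega
  -- each Ω i is convex, hence preconnected
  have hΩconv : ∀ i, Convex ℝ (Ω i) := by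
    intro i
    by_cases hi : (i : ℕ) + 1 < m
    · have : Ω i = {y | ((i : ℕ) : ℝ) < y z ∧ y z < ((i : ℕ) : ℝ) + 1} := by
        ext y; simp only [hΩdef, Set.mem_setOf_eq]
        constructor
        · intro h; exact ⟨h.1, h.2 hi⟩
        · intro h; exact ⟨h.1, fun _ => h.2⟩
      rw [this]
      have : {y : Fin n → ℝ | ((i : ℕ) : ℝ) < y z ∧ y z < ((i : ℕ) : ℝ) + 1}
          = (LinearMap.proj z : (Fin n → ℝ) →ₗ[ℝ] ℝ) ⁻¹' (Set.Ioo ((i : ℕ) : ℝ) ((i : ℕ) + 1)) := rfl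
      rw [this]
      exact (convex_Ioo _ _).linear_preimage _
    · have : Ω i = {y | ((i : ℕ) : ℝ) < y z} := by
        ext y; simp only [hΩdef, Set.mem_setOf_eq]
        constructor
        · intro h; exact h.1
        · intro h; exact ⟨h, fun hc => absurd hc hi⟩
      rw [this]
      have : {y : Fin n → ℝ | ((i : ℕ) : ℝ) < y z}
          = (LinearMap.proj z : (Fin n → ℝ) →ₗ[ℝ] ℝ) ⁻¹' (Set.Ioi ((i : ℕ) : ℝ)) := rfl
      rw [this]
      exact (convex_Ioi _).linear_preimage _
  -- Ω i is the connected component of p i in S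
  have hcomp : ∀ i, Ω i = connectedComponentIn S (p i) := by
    intro i
    apply Set.Subset.antisymm
    · exact (hΩconv i).isPreconnected.subset_connectedComponentIn (hpΩ i) (hΩS i)
    · intro y hy
      set C := connectedComponentIn S (p i) with hC
      have hCpre : IsPreconnected C := isPreconnected_connectedComponentIn
      have hCS : C ⊆ S := connectedComponentIn_subset _ _
      have hpC : p i ∈ C := mem_connectedComponentIn ((hΩS i) (hpΩ i))
      -- image of C under the z-th coordinate is ord-connected
      have hcont : Continuous (fun y : Fin n → ℝ => y z) := continuous_apply z
      have himg : IsPreconnected ((fun y : Fin n → ℝ => y z) '' C) :=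
        hCpre.image _ hcont.continuousOn
      have hord := himg.ordConnected
      have hyim : y z ∈ (fun y : Fin n → ℝ => y z) '' C := ⟨y, hy, rfl⟩
      have hpim : (p i) z ∈ (fun y : Fin n → ℝ => y z) '' C := ⟨p i, hpC, rfl⟩
      have havoid : ∀ t ∈ (fun y : Fin n → ℝ => y z) '' C, ∀ j : Fin m, t ≠ ((j : ℕ) : ℝ) := by
        rintro t ⟨u, hu, rfl⟩ j
        exact (hSmem u).mp (hCS hu) j
      constructor
      · -- (i : ℕ) < y z
        by_contra hle
        push_neg at hle
        have hmem : ((i : ℕ) : ℝ) ∈ (fun y : Fin n → ℝ => y z) '' C := by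
          apply hord.out hyim hpim
          constructor
          · exact hle
          · rw [hpz]; linarith
        exact havoid _ hmem i rfl
      · -- upper bound
        intro hi1
        by_contra hle
        push_neg at hle
        have hmem : (((i : ℕ) : ℝ) + 1) ∈ (fun y : Fin n → ℝ => y z) '' C := by
          apply hord.out hpim hyim
          constructor
          · rw [hpz]; linarith
          · exact hle
        set j : Fin m := ⟨(i : ℕ) + 1, hi1⟩ with hj
        have : ((i : ℕ) : ℝ) + 1 = ((j : ℕ) : ℝ) := by
          simp [hj]
        exact havoid _ hmem j this
  -- distinguishability of the regions
  have hdist : Distinguishable Ω := by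
    refine ⟨1, w, b, fun ν => ?_, ?_, ?_⟩
    · intro hc
      have : (Pi.single z 1 : Fin n → ℝ) z = 0 := by rw [show (Pi.single z 1 : Fin n → ℝ) = 0 from hc]; rfl
      simp at this
    · intro ν x hx
      rw [hwd]
      simp only [Equiv.Perm.one_apply] at hx
      have := hx.1
      linarith
    · intro μ ν hμν x hx
      rw [hwd]
      simp only [Equiv.Perm.one_apply] at hx
      have hμν' : (μ : ℕ) < (ν : ℕ) := hμν
      have h2 := hx.2 (by omega)
      have : ((μ : ℕ) : ℝ) + 1 ≤ ((ν : ℕ) : ℝ) := by exact_mod_cast hμν'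
      linarith
  refine ⟨w, b, ?_, Ω, ?_, ?_, ?_, hdist, ?_⟩
  · intro i hc
    have : (w i) z = 0 := by rw [hc]; rfl
    simp [hwdef] at this
  · -- injectivity
    intro i j hij
    by_contra hne
    rcases lt_or_gt_of_ne (fun hc : (i : ℕ) = (j : ℕ) => hne (Fin.ext hc)) with h | h
    · have : p j ∈ Ω i := hij ▸ hpΩ j
      have h2 := this.2 (by omega)
      rw [hpz] at h2
      have : ((i : ℕ) : ℝ) + 1 ≤ ((j : ℕ) : ℝ) := by exact_mod_cast h
      linarith
    · have hmem : p i ∈ Ω j := hij ▸ hpΩ i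
      have h2 := hmem.2 (by omega)
      rw [hpz] at h2
      have : ((j : ℕ) : ℝ) + 1 ≤ ((i : ℕ) : ℝ) := by exact_mod_cast h
      linarith
  · exact fun i => ⟨p i, hpΩ i⟩
  · exact fun i => ⟨p i, (hΩS i) (hpΩ i), hcomp i⟩
  · exact fun D _ hD => distinguishable_mono hdist hD
end

section
/- Let D ⊆ ℝⁿ be a finite set with |D| = ν and let f : D → ℝ be an arbitrary function. Then for every m ≥ ν(n+1) there exist w_1,…,w_m ∈ ℝⁿ, b_1,…,b_m ∈ ℝ and α_1,…,α_m ∈ ℝ such that Σ_{j=1}^m α_j σ(w_jᵀx + b_j) = f(x) for all x ∈ D. -/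
/-!
Project the data onto a direction `v` on which the points of `D` have pairwise distinct images
`t = v ⬝ᵥ x`; such a direction exists because finitely many proper hyperplanes of the dual space
cannot cover it. On the line, order the images `t₁ < ⋯ < t_ν` and add one ramp
`α_j · max 0 (t - c_j)` per point, with threshold `t_{j-1} ≤ c_j < t_j`: the new ramp vanishes at
all earlier points, so its coefficient can be chosen to fit the value at `t_j`. This uses
`ν ≤ ν (n + 1) ≤ m` units; the remaining ones get zero output weight.
-/

open Matrix Function

theorem Module.exists_dual_injOn {K M : Type*} [Field K] [Infinite K] [AddCommGroup M]
    [Module K M] {s : Set M} (hs : s.Finite) : ∃ φ : Module.Dual K M, Set.InjOn φ s := by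
  have := hs.to_subtype
  obtain ⟨φ, hφ⟩ := Module.exists_dual_forall_apply_ne_zero (K := K)
    (fun p : {p : s × s // p.1 ≠ p.2} => (p.1.1 : M) - p.1.2)
    fun p => sub_ne_zero.mpr (Subtype.coe_injective.ne p.2)
  refine ⟨φ, fun x hx y hy hxy => by_contra fun hne => ?_⟩
  exact hφ ⟨(⟨x, hx⟩, ⟨y, hy⟩), fun h => hne (congrArg Subtype.val h)⟩ (by simpa [sub_eq_zero])

theorem exists_dotProduct_injOn {K ι : Type*} [Field K] [Infinite K] [Fintype ι] [DecidableEq ι]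
    {s : Set (ι → K)} (hs : s.Finite) : ∃ v : ι → K, Set.InjOn (v ⬝ᵥ ·) s := by
  obtain ⟨φ, hφ⟩ := Module.exists_dual_injOn (K := K) hs
  refine ⟨(dotProductEquiv K ι).symm φ, ?_⟩
  rw [← (dotProductEquiv K ι).apply_symm_apply φ] at hφ
  exact hφ

theorem exists_sum_relu_sub_eq_on_finset {X : Type*} [DecidableEq X] (p f : X → ℝ) (s : Finset X)
    (hp : Set.InjOn p s) :
    ∃ c α : X → ℝ, ∀ x ∈ s, ∑ y ∈ s, α y * max 0 (p x - c y) = f x := by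
  induction s using Finset.induction_on_max_value p with
  | empty => exact ⟨0, 0, by simp⟩
  | insert a s ha hmax ih =>
    obtain ⟨c, α, hcα⟩ := ih (hp.mono (by simp))
    have hlt : ∀ x ∈ s, p x < p a := fun x hx =>
      (hmax x hx).lt_of_ne fun h => ne_of_mem_of_not_mem hx ha (hp (by simp [hx]) (by simp) h)
    obtain ⟨c₀, hc₀a, hsc₀⟩ : ∃ c₀ < p a, ∀ x ∈ s, p x ≤ c₀ := by
      let T := insert (p a - 1) (s.image p)
      refine ⟨T.max' (Finset.insert_nonempty _ _), ?_, fun x hx => T.le_max' _ ?_⟩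
      · exact (T.max'_lt_iff _).mpr (by simpa [T] using hlt)
      · exact Finset.mem_insert_of_mem (Finset.mem_image_of_mem p hx)
    obtain ⟨A, hA⟩ : ∃ A, A * (p a - c₀) = f a - ∑ y ∈ s, α y * max 0 (p a - c y) :=
      ⟨_, div_mul_cancel₀ _ (sub_ne_zero.mpr hc₀a.ne')⟩
    refine ⟨update c a c₀, update α a A, fun x hx => ?_⟩
    have hs : ∀ x, ∑ y ∈ s, update α a A y * max 0 (p x - update c a c₀ y) =
        ∑ y ∈ s, α y * max 0 (p x - c y) := fun x =>
      Finset.sum_congr rfl fun y hy => by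
        rw [update_of_ne (ne_of_mem_of_not_mem hy ha), update_of_ne (ne_of_mem_of_not_mem hy ha)]
    rw [Finset.sum_insert ha, hs, update_self, update_self]
    obtain rfl | hx := Finset.mem_insert.mp hx
    · rw [max_eq_right (sub_nonneg.mpr hc₀a.le), hA, sub_add_cancel]
    · rw [max_eq_left (sub_nonpos.mpr (hsc₀ x hx)), mul_zero, zero_add, hcα x hx]

theorem exists_fin_sum_relu_eq {ι κ : Type*} [Fintype ι] [Fintype κ] {m : ℕ}
    (hm : Fintype.card ι ≤ m) (w : ι → κ → ℝ) (b α : ι → ℝ) :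
    ∃ (w' : Fin m → κ → ℝ) (b' α' : Fin m → ℝ), ∀ x,
      ∑ j, α' j * max 0 (w' j ⬝ᵥ x + b' j) = ∑ i, α i * max 0 (w i ⬝ᵥ x + b i) := by
  classical
  obtain ⟨e⟩ := Function.Embedding.nonempty_of_card_le (hm.trans_eq (Fintype.card_fin m).symm)
  refine ⟨extend e w 0, extend e b 0, extend e α 0, fun x => ?_⟩
  rw [← Finset.sum_subset (Finset.subset_univ (Finset.univ.map e)), Finset.sum_map]
  · simp only [e.injective.extend_apply]
  · intro j _ hj
    rw [extend_apply' _ _ _ (by simpa using hj), Pi.zero_apply, zero_mul]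

open Matrix in
/-- A three-layer ReLU network with `m ≥ ν(n+1)` hidden units can
interpolate any function on a finite set `D ⊆ ℝⁿ` of cardinality `ν` (in particular
any discrete piecewise linear function). -/
theorem stmt_9 (n ν : ℕ) (D : Set (Fin n → ℝ)) (hfin : D.Finite) (hcard : D.ncard = ν)
    (f : (Fin n → ℝ) → ℝ) (m : ℕ) (hm : ν * (n + 1) ≤ m) :
    ∃ (w : Fin m → Fin n → ℝ) (b α : Fin m → ℝ),
      ∀ x ∈ D, ∑ j, α j * max 0 (w j ⬝ᵥ x + b j) = f x := by
  classical
  obtain ⟨v, hv⟩ := exists_dotProduct_injOn hfin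
  obtain ⟨c, α, hcα⟩ :=
    exists_sum_relu_sub_eq_on_finset (v ⬝ᵥ ·) f hfin.toFinset (by simpa using hv)
  have hcard_le : Fintype.card hfin.toFinset ≤ m := by
    rw [Fintype.card_coe, ← Set.ncard_eq_toFinset_card D hfin, hcard]
    exact (Nat.le_mul_of_pos_right ν n.succ_pos).trans hm
  obtain ⟨w', b', α', hnet⟩ :=
    exists_fin_sum_relu_eq hcard_le (fun _ => v) (fun y => -c y) (fun y => α y)
  refine ⟨w', b', α', fun x hx => ?_⟩
  rw [hnet, Finset.sum_coe_sort hfin.toFinset (fun y => α y * max 0 (v ⬝ᵥ x + -c y))]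
  simpa [sub_eq_add_neg] using hcα x (by simpa using hx)
end

section
/- Let D ⊆ ℝⁿ be a finite set with |D| = ν and let f : D → ℝ^μ be an arbitrary function with coordinate functions f_1,…,f_μ. Then for every m ≥ ν(n+1) there exist shared hidden-layer parameters w_1,…,w_m ∈ ℝⁿ, b_1,…,b_m ∈ ℝ and, for each output index i ∈ {1,…,μ}, output weights α^{(i)}_1,…,α^{(i)}_m ∈ ℝ such that Σ_{j=1}^m α^{(i)}_j σ(w_jᵀx + b_j) = f_i(x) for every x ∈ D and every i; that is, a single hidden layer is shared by all μ linear output units. -/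
open Matrix

lemma exists_sep (n : ℕ) (D : Set (Fin n → ℝ)) (hfin : D.Finite) :
    ∃ v : Fin n → ℝ, Set.InjOn (fun x => v ⬝ᵥ x) D := by
  by_contra hc
  push_neg at hc
  simp only [Set.InjOn, not_forall] at hc
  set P : Set ((Fin n → ℝ) × (Fin n → ℝ)) :=
    {p | p.1 ∈ D ∧ p.2 ∈ D ∧ p.1 ≠ p.2} with hP
  have hPfin : P.Finite := by
    apply Set.Finite.subset (hfin.prod hfin)
    rintro ⟨a, b⟩ ⟨h1, h2, _⟩; exact ⟨h1, h2⟩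
  have : Finite P := hPfin
  set L : (Fin n → ℝ) → (Fin n → ℝ) →ₗ[ℝ] ℝ := fun d =>
    { toFun := fun v => v ⬝ᵥ d
      map_add' := fun u v => add_dotProduct u v d
      map_smul' := fun c v => smul_dotProduct c v d } with hL
  set K : P → Subspace ℝ (Fin n → ℝ) := fun p => LinearMap.ker (L (p.1.1 - p.1.2)) with hK
  have hcov : ⋃ p, (K p : Set (Fin n → ℝ)) = Set.univ := by
    ext v
    simp only [Set.mem_iUnion, Set.mem_univ, iff_true]
    obtain ⟨x, hx, y, hy, hxy, hne⟩ := hc v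
    refine ⟨⟨(x, y), ⟨hx, hy, hne⟩⟩, ?_⟩
    simp only [hK, LinearMap.mem_ker, hL, LinearMap.coe_mk, AddHom.coe_mk,
      dotProduct_sub, hxy, sub_self, SetLike.mem_coe]
  obtain ⟨p, hp⟩ := Subspace.exists_eq_top_of_iUnion_eq_univ hcov
  have hd : p.1.1 - p.1.2 ≠ 0 := sub_ne_zero.mpr p.2.2.2
  have : (p.1.1 - p.1.2) ⬝ᵥ (p.1.1 - p.1.2) = 0 := by
    have := hp ▸ Submodule.mem_top (x := p.1.1 - p.1.2) (R := ℝ)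
    simpa [hK, hL] using (hp.symm ▸ Submodule.mem_top :
      (p.1.1 - p.1.2) ∈ K p)
  exact hd (dotProduct_self_eq_zero.mp this)

open Matrix in
/-- A three-layer ReLU network with a shared hidden layer of
`m ≥ ν(n+1)` units and `μ` linear output units can interpolate any `ℝ^μ`-valued
function on a finite set `D ⊆ ℝⁿ` of cardinality `ν`: the hidden weights and biases
are common to all outputs, each output having its own output weights. -/
theorem stmt_10 (n μ ν : ℕ) (D : Set (Fin n → ℝ)) (hfin : D.Finite) (hcard : D.ncard = ν)
    (f : (Fin n → ℝ) → Fin μ → ℝ) (m : ℕ) (hm : ν * (n + 1) ≤ m) :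
    ∃ (w : Fin m → Fin n → ℝ) (b : Fin m → ℝ) (α : Fin μ → Fin m → ℝ),
      ∀ x ∈ D, ∀ i : Fin μ, ∑ j, α i j * max 0 (w j ⬝ᵥ x + b j) = f x i := by
  obtain ⟨v, hv⟩ := exists_sep n D hfin
  classical
  set s : Finset (Fin n → ℝ) := hfin.toFinset with hs
  have hsD : ∀ {x}, x ∈ s ↔ x ∈ D := fun {x} => hfin.mem_toFinset
  have hscard : s.card = ν := by
    rw [hs, ← hcard, Set.ncard_eq_toFinset_card D hfin]
  set T : Finset ℝ := s.image (fun x => v ⬝ᵥ x) with hTdef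
  have hT : T.card = ν := by
    rw [hTdef, Finset.card_image_of_injOn (fun x hx y hy => hv (hsD.mp hx) (hsD.mp hy)), hscard]
  set o := T.orderIsoOfFin hT with ho
  have hex : ∀ k : Fin ν, ∃ x, x ∈ s ∧ v ⬝ᵥ x = (o k : ℝ) := by
    intro k
    obtain ⟨a, ha, ha2⟩ := Finset.mem_image.mp (o k).2
    exact ⟨a, ha, ha2⟩
  choose X hXs hXt using hex
  set t : Fin ν → ℝ := fun k => v ⬝ᵥ X k with ht
  have htval : ∀ k, t k = (o k : ℝ) := fun k => hXt k
  have htmono : StrictMono t := by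
    intro k l h
    rw [htval, htval]
    exact_mod_cast o.strictMono h
  have hXsurj : ∀ y ∈ s, ∃ k, X k = y := by
    intro y hy
    have hmem : v ⬝ᵥ y ∈ T := Finset.mem_image_of_mem _ hy
    obtain ⟨k, hk⟩ := o.surjective ⟨_, hmem⟩
    refine ⟨k, hv (hsD.mp (hXs k)) (hsD.mp hy) ?_⟩
    show v ⬝ᵥ X k = v ⬝ᵥ y
    rw [hXt k, hk]
  -- epsilon
  set G : Finset ℝ := insert 1 (Finset.univ.image
    (fun p : Fin ν × Fin ν => if p.1 < p.2 then t p.2 - t p.1 else 1)) with hG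
  set ε : ℝ := G.min' (Finset.insert_nonempty _ _) with hε
  have hεpos : 0 < ε := by
    have hmem := G.min'_mem (Finset.insert_nonempty _ _)
    rw [← hε] at hmem
    rw [hG, Finset.mem_insert] at hmem
    rcases hmem with h | h
    · rw [h]; norm_num
    · rw [Finset.mem_image] at h
      obtain ⟨p, _, hp⟩ := h
      rw [← hp]
      split
      · next hlt => linarith [htmono hlt]
      · norm_num
  have hεle : ∀ k l : Fin ν, k < l → ε ≤ t l - t k := by
    intro k l h
    apply Finset.min'_le
    rw [hG]
    apply Finset.mem_insert_of_mem
    exact Finset.mem_image.mpr ⟨(k, l), Finset.mem_univ _, by simp [h]⟩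
  set M : Matrix (Fin ν) (Fin ν) ℝ := Matrix.of (fun j k => max 0 (t j - t k + ε)) with hM
  have hMtri : ∀ j k : Fin ν, j < k → M j k = 0 := by
    intro j k h
    have := hεle j k h
    simp only [hM, Matrix.of_apply]
    exact max_eq_left (by linarith)
  have hMdiag : ∀ j, M j j = ε := by
    intro j
    simp only [hM, Matrix.of_apply, sub_self, zero_add]
    exact max_eq_right hεpos.le
  have hdet : IsUnit M.det := by
    rw [Matrix.det_of_lowerTriangular M (fun i j h => hMtri i j (by simpa using h))]
    simp only [hMdiag]
    simp only [Finset.prod_const, Finset.card_univ, Fintype.card_fin]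
    exact (pow_ne_zero _ hεpos.ne').isUnit
  set α' : Fin μ → Fin ν → ℝ := fun i => M⁻¹ *ᵥ (fun k => f (X k) i) with hα'
  have hsolve : ∀ i j, ∑ k, M j k * α' i k = f (X j) i := by
    intro i j
    have hMv : M *ᵥ α' i = fun k => f (X k) i := by
      rw [hα', Matrix.mulVec_mulVec, Matrix.mul_nonsing_inv _ hdet, Matrix.one_mulVec]
    calc ∑ k, M j k * α' i k = (M *ᵥ α' i) j := by
          simp [Matrix.mulVec, dotProduct]
      _ = f (X j) i := by rw [hMv]
  have hν : ν ≤ m := le_trans (Nat.le_mul_of_pos_right ν n.succ_pos) hm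
  refine ⟨fun j => if h : (j : ℕ) < ν then v else 0,
         fun j => if h : (j : ℕ) < ν then -(t ⟨j, h⟩) + ε else -1,
         fun i j => if h : (j : ℕ) < ν then α' i ⟨j, h⟩ else 0, ?_⟩
  intro x hx i
  obtain ⟨j₀, hj₀⟩ := hXsurj x (hsD.mpr hx)
  set F : ℕ → ℝ := fun j =>
    if h : j < ν then α' i ⟨j, h⟩ * max 0 (v ⬝ᵥ x + (-(t ⟨j, h⟩) + ε)) else 0 with hF
  have hterm : ∀ j : Fin m,
      (if h : (j : ℕ) < ν then α' i ⟨j, h⟩ else 0) *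
        max 0 ((if h : (j : ℕ) < ν then v else 0) ⬝ᵥ x +
          (if h : (j : ℕ) < ν then -(t ⟨j, h⟩) + ε else -1)) = F (j : ℕ) := by
    intro j
    by_cases h : (j : ℕ) < ν
    · simp [hF, h]
    · simp [hF, h]
  rw [Finset.sum_congr rfl (fun j _ => hterm j), Fin.sum_univ_eq_sum_range]
  rw [← Finset.sum_subset (Finset.range_subset_range.mpr hν)
    (fun j _ hj => by
      rw [hF]
      rw [Finset.mem_range, not_lt] at hj
      exact dif_neg (by omega))]
  rw [← Fin.sum_univ_eq_sum_range]
  have hxv : v ⬝ᵥ x = t j₀ := by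
    show v ⬝ᵥ x = v ⬝ᵥ X j₀
    rw [hj₀]
  have : ∀ k : Fin ν, F (k : ℕ) = M j₀ k * α' i k := by
    intro k
    have h1 : F (k : ℕ) = α' i k * max 0 (v ⬝ᵥ x + (-(t k) + ε)) := by
      simp [hF, k.isLt]
    rw [h1, mul_comm]
    congr 1
    simp only [hM, Matrix.of_apply, hxv]
    congr 1
    ring
  rw [Finset.sum_congr rfl (fun k _ => this k), hsolve i j₀, hj₀]
end

section
/- Let D_1,…,D_μ ⊆ ℝⁿ be pairwise disjoint finite sets with D = D_1 ∪ … ∪ D_μ and |D| = ν. Then for every m ≥ ν(n+1) there exist shared hidden-layer parameters w_1,…,w_m ∈ ℝⁿ, b_1,…,b_m ∈ ℝ and, for each i ∈ {1,…,μ}, output parameters α^{(i)} ∈ ℝ^m and β_i ∈ ℝ such that the i-th output unit's value σ(Σ_{j=1}^m α^{(i)}_j σ(w_jᵀx + b_j) + β_i) is strictly positive for every x ∈ D_i and equals 0 for every x ∈ D \ D_i; i.e. the network classifies the μ categories. -/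
/-!
Choose a linear functional `u` that is injective on the finite data set; this reduces the
problem to data on a line. There, order the distinct values and give each value `t` a ReLU
unit `σ(y - c t)` whose threshold `c t` lies below `t` but above every smaller value. The unit
of `t` is silent on all smaller values, so the units form a triangular system with nonzero
diagonal, and any targets — in particular the indicator of each category — are interpolated
exactly. The thresholds do not depend on the targets, so all outputs share the hidden layer.
-/

open Matrix Finset Function

theorem Set.Finite.exists_injOn_dotProduct {K ι : Type*} [Field K] [Infinite K] [Fintype ι]
    {S : Set (ι → K)} (hS : S.Finite) : ∃ u : ι → K, S.InjOn (u ⬝ᵥ ·) := by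
  classical
  have : Finite S.offDiag := hS.offDiag.to_subtype
  let P : S.offDiag → Subspace K (ι → K) := fun pq =>
    LinearMap.ker (dotProductEquiv K ι (pq.1.1 - pq.1.2))
  have hP : ∀ pq, P pq ≠ ⊤ := by
    rintro ⟨⟨p, q⟩, -, -, hpq⟩
    rw [Ne, LinearMap.ker_eq_top, LinearEquiv.map_eq_zero_iff, sub_eq_zero]
    exact hpq
  obtain ⟨u, hu⟩ : ∃ u, u ∉ ⋃ pq, (P pq : Set (ι → K)) := by
    by_contra! h
    obtain ⟨pq, hpq⟩ := Subspace.exists_eq_top_of_iUnion_eq_univ (Set.eq_univ_of_forall h)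
    exact hP pq hpq
  refine ⟨u, fun p hp q hq hpq => by_contra fun hne => hu ?_⟩
  refine Set.mem_iUnion.2 ⟨⟨(p, q), hp, hq, hne⟩, ?_⟩
  simp [P, dotProduct_comm _ u, hpq]

theorem Set.Finite.exists_injective_fin_of_ncard_le {β : Type*} [Infinite β] {A : Set β}
    (hA : A.Finite) {m : ℕ} (hm : A.ncard ≤ m) :
    ∃ p : Fin m → β, Injective p ∧ A ⊆ Set.range p := by
  obtain ⟨T, hAT, hT⟩ := Infinite.exists_superset_card_eq hA.toFinset m
    (by rwa [← Set.ncard_eq_toFinset_card A hA])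
  let e := T.equivFinOfCardEq hT
  refine ⟨fun k => e.symm k, Subtype.val_injective.comp e.symm.injective, fun x hx => ?_⟩
  exact ⟨e ⟨x, hAT (hA.mem_toFinset.2 hx)⟩, by simp⟩

theorem Finset.exists_relu_thresholds (T : Finset ℝ) :
    ∃ c : ℝ → ℝ, (∀ t, c t < t) ∧ ∀ s ∈ T, ∀ t, s < t → s ≤ c t := by
  refine ⟨fun t => (insert (t - 1) (T.filter (· < t))).max' (insert_nonempty _ _), fun t => ?_,
    fun s hs t hst => le_max' _ _ (mem_insert_of_mem (mem_filter.2 ⟨hs, hst⟩))⟩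
  simp only [max'_lt_iff, mem_insert, mem_filter]
  rintro s (rfl | ⟨-, hs⟩)
  · linarith
  · exact hs

theorem Finset.exists_relu_interpolation (T : Finset ℝ) {c : ℝ → ℝ}
    (hc_lt : ∀ t ∈ T, c t < t) (hc_ge : ∀ s ∈ T, ∀ t ∈ T, s < t → s ≤ c t) (f : ℝ → ℝ) :
    ∃ a : ℝ → ℝ, ∀ y ∈ T, ∑ t ∈ T, a t * max 0 (y - c t) = f y := by
  induction T using Finset.induction_on_max with
  | empty => exact ⟨0, by simp⟩
  | insert t₀ T hlt ih =>
    have ht₀ : t₀ ∉ T := fun h => lt_irrefl _ (hlt t₀ h)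
    obtain ⟨a, ha⟩ := ih (fun t ht => hc_lt t (mem_insert_of_mem ht))
      (fun s hs t ht => hc_ge s (mem_insert_of_mem hs) t (mem_insert_of_mem ht))
    have hgap : 0 < t₀ - c t₀ := sub_pos.2 (hc_lt t₀ (mem_insert_self _ _))
    obtain ⟨a₀, ha₀⟩ : ∃ a₀, a₀ * (t₀ - c t₀) + ∑ t ∈ T, a t * max 0 (t₀ - c t) = f t₀ :=
      ⟨(f t₀ - ∑ t ∈ T, a t * max 0 (t₀ - c t)) / (t₀ - c t₀),
        by rw [div_mul_cancel₀ _ hgap.ne', sub_add_cancel]⟩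
    refine ⟨update a t₀ a₀, fun y hy => ?_⟩
    have hsum : ∑ t ∈ T, update a t₀ a₀ t * max 0 (y - c t) = ∑ t ∈ T, a t * max 0 (y - c t) :=
      sum_congr rfl fun t ht => by rw [update_of_ne (ne_of_mem_of_not_mem ht ht₀)]
    rw [sum_insert ht₀, hsum, update_self]
    rcases mem_insert.1 hy with rfl | hy
    · rw [max_eq_right hgap.le, ha₀]
    · have hsilent : y - c t₀ ≤ 0 :=
        sub_nonpos.2 (hc_ge y (mem_insert_of_mem hy) t₀ (mem_insert_self _ _) (hlt y hy))
      rw [max_eq_left hsilent, mul_zero, zero_add, ha y hy]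

theorem exists_relu_interpolation_of_injective {ι : Type*} [Fintype ι] {p : ι → ℝ}
    (hp : Injective p) :
    ∃ c : ι → ℝ, ∀ f : ι → ℝ, ∃ a : ι → ℝ, ∀ k, ∑ j, a j * max 0 (p k - c j) = f k := by
  obtain ⟨c, hc_lt, hc_ge⟩ := (univ.image p).exists_relu_thresholds
  refine ⟨c ∘ p, fun f => ?_⟩
  obtain ⟨a, ha⟩ := (univ.image p).exists_relu_interpolation (fun t _ => hc_lt t)
    (fun s hs t _ => hc_ge s hs t) (extend p f 0)
  refine ⟨a ∘ p, fun k => ?_⟩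
  have := ha (p k) (mem_image_of_mem p (mem_univ k))
  rwa [sum_image fun i _ j _ h => hp h, hp.extend_apply] at this

open Matrix in
theorem stmt_11_general (n μ ν : ℕ) (D : Fin μ → Set (Fin n → ℝ))
    (hfin : ∀ i, (D i).Finite)
    (hcard : (⋃ i, D i).ncard = ν)
    (m : ℕ) (hm : ν * (n + 1) ≤ m) :
    ∃ (w : Fin m → Fin n → ℝ) (b : Fin m → ℝ) (α : Fin μ → Fin m → ℝ) (β : Fin μ → ℝ),
      ∀ i : Fin μ,
        (∀ x ∈ D i, 0 < max 0 (∑ j, α i j * max 0 (w j ⬝ᵥ x + b j) + β i)) ∧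
        (∀ x ∈ (⋃ i', D i') \ D i,
          max 0 (∑ j, α i j * max 0 (w j ⬝ᵥ x + b j) + β i) = 0) := by
  classical
  have hS : (⋃ i, D i).Finite := Set.finite_iUnion hfin
  obtain ⟨u, hu⟩ := hS.exists_injOn_dotProduct
  have hνm : ((u ⬝ᵥ ·) '' ⋃ i, D i).ncard ≤ m := by
    rw [hu.ncard_image, hcard]
    exact (Nat.le_mul_of_pos_right ν n.succ_pos).trans hm
  obtain ⟨p, hp, hSp⟩ := (hS.image _).exists_injective_fin_of_ncard_le hνm
  obtain ⟨c, hc⟩ := exists_relu_interpolation_of_injective hp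
  choose α hα using fun i : Fin μ => hc fun k => if p k ∈ (u ⬝ᵥ ·) '' D i then 1 else 0
  have hout : ∀ i, ∀ x ∈ ⋃ i', D i',
      ∑ j, α i j * max 0 (u ⬝ᵥ x + -c j) = if x ∈ D i then 1 else 0 := by
    intro i x hx
    obtain ⟨k, hk⟩ := hSp (Set.mem_image_of_mem _ hx)
    simp_rw [← sub_eq_add_neg, ← hk, hα i k, hk, hu.mem_image_iff (Set.subset_iUnion D i) hx]
  refine ⟨fun _ => u, -c, α, 0, fun i => ⟨fun x hx => ?_, fun x hx => ?_⟩⟩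
  · simp [hout i x (Set.mem_iUnion_of_mem i hx), hx]
  · simp [hout i x hx.1, hx.2]

open Matrix in
/-- A three-layer ReLU network with a shared hidden layer of
`m ≥ ν(n+1)` units and `μ` ReLU output units can classify any `μ`-category data set
`D = D₁ ∪ … ∪ D_μ` of total cardinality `ν`: the `i`-th output is strictly positive
on `D i` and zero on the other categories. -/
theorem stmt_11 (n μ ν : ℕ) (D : Fin μ → Set (Fin n → ℝ))
    (hfin : ∀ i, (D i).Finite)
    (hdisj : ∀ i j, i ≠ j → Disjoint (D i) (D j))
    (hcard : (⋃ i, D i).ncard = ν)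
    (m : ℕ) (hm : ν * (n + 1) ≤ m) :
    ∃ (w : Fin m → Fin n → ℝ) (b : Fin m → ℝ) (α : Fin μ → Fin m → ℝ) (β : Fin μ → ℝ),
      ∀ i : Fin μ,
        (∀ x ∈ D i, 0 < max 0 (∑ j, α i j * max 0 (w j ⬝ᵥ x + b j) + β i)) ∧
        (∀ x ∈ (⋃ i', D i') \ D i,
          max 0 (∑ j, α i j * max 0 (w j ⬝ᵥ x + b j) + β i) = 0) :=
  stmt_11_general n μ ν D hfin hcard m hm
end

section
/- (Interference-avoiding principle.) Let w_1,…,w_m ∈ ℝⁿ and β_1,…,β_m ∈ ℝ be the first-layer parameters, and let D_1, D_2 ⊆ ℝⁿ be finite sets such that for some index ν: w_νᵀx + β_ν ≤ 0 for all x ∈ D_1 and w_νᵀx + β_ν > 0 for all x ∈ D_2. Suppose u ∈ ℝ^m and c ∈ ℝ are second-layer parameters with Σ_{j=1}^m u_j σ(w_jᵀx + β_j) + c > 0 for all x ∈ D_1. Then there exists u' ∈ ℝ^m with u'_j = u_j for all j ≠ ν such that Σ_{j=1}^m u'_j σ(w_jᵀx + β_j) + c > 0 for all x ∈ D_1 and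 Σ_{j=1}^m u'_j σ(w_jᵀx + β_j) + c < 0 for all x ∈ D_2; that is, the second-layer unit remains activated by D_1 but is not activated by D_2. -/
/-! On `D₁` the `ν`-th first-layer unit outputs `0`, so the weight `u ν` does not affect the
input sum there. On `D₂` that unit outputs a positive value, and `D₂` is finite, so lowering
`u ν` far enough makes the input sum negative on all of `D₂` at once. -/

open Filter Matrix

theorem Finset.sum_update_mul {ι R : Type*} [Fintype ι] [DecidableEq ι] [CommRing R]
    (u h : ι → R) (ν : ι) (t : R) :
    ∑ j, Function.update u ν t j * h j = ∑ j, u j * h j + (t - u ν) * h ν := by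
  have hpoint : ∀ j, Function.update u ν t j * h j
      = u j * h j + if j = ν then (t - u ν) * h j else 0 := by
    intro j
    by_cases hj : j = ν
    · subst hj; simp only [Function.update_self, if_true]; ring
    · simp only [Function.update_of_ne hj, hj, if_false, add_zero]
  simp only [hpoint, Finset.sum_add_distrib, Finset.sum_ite_eq', Finset.mem_univ, if_true]

theorem Set.Finite.eventually_atBot_forall_add_mul_neg {α : Type*} {S : Set α}
    (hS : S.Finite) {a : α → ℝ} (ha : ∀ x ∈ S, 0 < a x) (r : α → ℝ) :
    ∀ᶠ t in atBot, ∀ x ∈ S, r x + t * a x < 0 := by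
  refine (hS.eventually_all).2 fun x hx => ?_
  have hlin : Tendsto (fun t => r x + t * a x) atBot atBot :=
    tendsto_atBot_add_const_left _ _ (tendsto_id.atBot_mul_const (ha x hx))
  exact hlin.eventually_lt_atBot 0

theorem stmt_12_general (n m : ℕ) (w : Fin m → Fin n → ℝ) (β : Fin m → ℝ)
    (D₁ D₂ : Set (Fin n → ℝ)) (hfin₂ : D₂.Finite)
    (ν : Fin m)
    (hν₁ : ∀ x ∈ D₁, w ν ⬝ᵥ x + β ν ≤ 0)
    (hν₂ : ∀ x ∈ D₂, 0 < w ν ⬝ᵥ x + β ν)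
    (u : Fin m → ℝ) (c : ℝ)
    (hu : ∀ x ∈ D₁, 0 < ∑ j, u j * max 0 (w j ⬝ᵥ x + β j) + c) :
    ∃ u' : Fin m → ℝ, (∀ j, j ≠ ν → u' j = u j) ∧
      (∀ x ∈ D₁, 0 < ∑ j, u' j * max 0 (w j ⬝ᵥ x + β j) + c) ∧
      (∀ x ∈ D₂, ∑ j, u' j * max 0 (w j ⬝ᵥ x + β j) + c < 0) := by
  obtain ⟨t, ht⟩ := (hfin₂.eventually_atBot_forall_add_mul_neg hν₂
    fun x => ∑ j, u j * max 0 (w j ⬝ᵥ x + β j) + c).exists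
  refine ⟨Function.update u ν (u ν + t), fun j hj => Function.update_of_ne hj _ _, ?_, ?_⟩
  · intro x hx
    have hinactive : max 0 (w ν ⬝ᵥ x + β ν) = 0 := max_eq_left (hν₁ x hx)
    rw [Finset.sum_update_mul, hinactive, mul_zero, add_zero]
    exact hu x hx
  · intro x hx
    have hactive : max 0 (w ν ⬝ᵥ x + β ν) = w ν ⬝ᵥ x + β ν := max_eq_right (hν₂ x hx).le
    rw [Finset.sum_update_mul, hactive, add_sub_cancel_left, add_right_comm]
    exact ht x hx

open Matrix in
/-- **Interference-avoiding principle.** If a first-layer hyperplane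
`(w ν, β ν)` separates `D₁` (nonpositive side) from `D₂` (positive side), and a
second-layer unit is activated by every point of `D₁`, then by changing only its
`ν`-th input weight the unit remains activated by `D₁` while its input sum becomes
negative on all of `D₂`. -/
theorem stmt_12 (n m : ℕ) (w : Fin m → Fin n → ℝ) (β : Fin m → ℝ)
    (D₁ D₂ : Set (Fin n → ℝ)) (hfin₁ : D₁.Finite) (hfin₂ : D₂.Finite)
    (ν : Fin m)
    (hν₁ : ∀ x ∈ D₁, w ν ⬝ᵥ x + β ν ≤ 0)
    (hν₂ : ∀ x ∈ D₂, 0 < w ν ⬝ᵥ x + β ν)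
    (u : Fin m → ℝ) (c : ℝ)
    (hu : ∀ x ∈ D₁, 0 < ∑ j, u j * max 0 (w j ⬝ᵥ x + β j) + c) :
    ∃ u' : Fin m → ℝ, (∀ j, j ≠ ν → u' j = u j) ∧
      (∀ x ∈ D₁, 0 < ∑ j, u' j * max 0 (w j ⬝ᵥ x + β j) + c) ∧
      (∀ x ∈ D₂, ∑ j, u' j * max 0 (w j ⬝ᵥ x + β j) + c < 0) :=
  stmt_12_general n m w β D₁ D₂ hfin₂ ν hν₁ hν₂ u c hu
end

section
/- Let D_1, D_2 ⊆ ℝⁿ be finite sets that are strictly linearly separable in the sense that there exist w ∈ ℝⁿ \ {0} and b ∈ ℝ with wᵀx + b > 0 for all x ∈ D_1 and wᵀx + b ≤ 0 for all x ∈ D_2. Then for all integers k_1, k_2 ≥ 1 and m = k_1 + k_2 there exist v_1,…,v_m ∈ ℝⁿ and c_1,…,c_m ∈ ℝ such that: v_jᵀx + c_j > 0 on D_1 and v_jᵀx + c_j ≤ 0 on D_2 for j = 1,…,k_1, while v_jᵀx + c_j ≤ 0 on D_1 and v_jᵀx + c_j > 0 on D_2 for j = k_1+1,…,m. Moreover,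 if k_1 = n the vectors v_1,…,v_n can be chosen so that the n × n matrix with rows v_1,…,v_n is invertible, so that on D_1 the mapped data (σ(v_1ᵀx + c_1),…,σ(v_mᵀx + c_m)) equals (Ax + c, 0,…,0) for an invertible affine map x ↦ Ax + c; and symmetrically for k_2 = n on D_2. -/
/-!
After shifting the bias, `(w, b)` separates `D₁` from `D₂` strictly on both sides, and then so
does `(-w, -b)` with the roles exchanged. Strict separation of finite sets is an open condition,
so the rows `w + ε eᵢ` of `W + ε • 1`, where every row of `W` is `w`, still separate for small
`ε`; and for all but finitely many `ε` this matrix is invertible, since `-ε` only has to avoid the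
spectrum of `W`. These rows (and copies of `w` beyond the `n`-th) give the first block; the same
construction for `(-w, -b)` gives the second. On the data a block is active on, the ReLU is the
identity on that block and vanishes on the other one.
-/

open Filter Topology Matrix

theorem Matrix.eventually_cofinite_isUnit_add_smul_one {ι K : Type*} [Fintype ι] [DecidableEq ι]
    [Field K] (B : Matrix ι ι K) : ∀ᶠ ε : K in cofinite, IsUnit (B + ε • 1) := by
  filter_upwards [(-B).finite_spectrum.eventually_cofinite_notMem] with ε hε
  simpa [spectrum.notMem_iff, Algebra.algebraMap_eq_smul_one, add_comm] using hε

section Separation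

variable {ι : Type*} [Fintype ι]

def StrictlySeparates (D₁ D₂ : Set (ι → ℝ)) (w : ι → ℝ) (b : ℝ) : Prop :=
  (∀ x ∈ D₁, 0 < w ⬝ᵥ x + b) ∧ ∀ x ∈ D₂, w ⬝ᵥ x + b < 0

variable {D₁ D₂ : Set (ι → ℝ)} {w : ι → ℝ} {b : ℝ}

theorem exists_strictlySeparates (hD₁ : D₁.Finite) (h₁ : ∀ x ∈ D₁, 0 < w ⬝ᵥ x + b)
    (h₂ : ∀ x ∈ D₂, w ⬝ᵥ x + b ≤ 0) : ∃ b', StrictlySeparates D₁ D₂ w b' := by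
  have : ∀ᶠ δ in 𝓝[>] 0, 0 < δ ∧ ∀ x ∈ D₁, δ < w ⬝ᵥ x + b :=
    Eventually.and self_mem_nhdsWithin <| nhdsWithin_le_nhds <|
      hD₁.eventually_all.2 fun x hx => eventually_lt_nhds (h₁ x hx)
  obtain ⟨δ, hδ, hlt⟩ := this.exists
  exact ⟨b - δ, fun x hx => by linarith [hlt x hx], fun x hx => by linarith [h₂ x hx]⟩

theorem StrictlySeparates.neg (h : StrictlySeparates D₁ D₂ w b) :
    StrictlySeparates D₂ D₁ (-w) (-b) :=
  ⟨fun x hx => by linarith [neg_dotProduct w x, h.2 x hx],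
    fun x hx => by linarith [neg_dotProduct w x, h.1 x hx]⟩

theorem StrictlySeparates.eventually_add_smul {κ : Type*} [Finite κ] (hD₁ : D₁.Finite)
    (hD₂ : D₂.Finite) (h : StrictlySeparates D₁ D₂ w b) (u : κ → ι → ℝ) :
    ∀ᶠ ε in 𝓝 (0 : ℝ), ∀ k, StrictlySeparates D₁ D₂ (w + ε • u k) b := by
  have hcont : ∀ k x, Tendsto (fun ε : ℝ => (w + ε • u k) ⬝ᵥ x + b) (𝓝 0) (𝓝 (w ⬝ᵥ x + b)) :=
    fun k x => by
      simp only [add_dotProduct, smul_dotProduct, smul_eq_mul]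
      exact Continuous.tendsto' (by fun_prop) 0 _ (by simp)
  refine eventually_all.2 fun k => (hD₁.eventually_all.2 fun x hx => ?_).and
    (hD₂.eventually_all.2 fun x hx => ?_)
  exacts [(hcont k x).eventually (lt_mem_nhds (h.1 x hx)),
    (hcont k x).eventually (gt_mem_nhds (h.2 x hx))]

theorem StrictlySeparates.exists_isUnit_forall_row [DecidableEq ι] (hD₁ : D₁.Finite)
    (hD₂ : D₂.Finite) (h : StrictlySeparates D₁ D₂ w b) :
    ∃ A : Matrix ι ι ℝ, IsUnit A ∧ ∀ i, StrictlySeparates D₁ D₂ (A i) b := by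
  have hrows := h.eventually_add_smul hD₁ hD₂ (1 : Matrix ι ι ℝ)
  have hinv := (of fun _ => w).eventually_cofinite_isUnit_add_smul_one
  obtain ⟨ε, hsep, hunit⟩ :=
    (Eventually.and (nhdsWithin_le_nhds hrows) (hinv.filter_mono (nhdsNE_le_cofinite 0))).exists
  -- the `i`-th row of `of (fun _ => w) + ε • 1` is `w + ε • 1 i` by definition
  exact ⟨_, hunit, hsep⟩

theorem StrictlySeparates.max_zero_eq_of_mem_left (h : StrictlySeparates D₁ D₂ w b) {x : ι → ℝ}
    (hx : x ∈ D₁) : max 0 (w ⬝ᵥ x + b) = w ⬝ᵥ x + b :=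
  max_eq_right (h.1 x hx).le

theorem StrictlySeparates.max_zero_eq_of_mem_right (h : StrictlySeparates D₁ D₂ w b) {x : ι → ℝ}
    (hx : x ∈ D₂) : max 0 (w ⬝ᵥ x + b) = 0 :=
  max_eq_left (h.2 x hx).le

end Separation

def Matrix.rowOr {α : Type*} {n : ℕ} (A : Matrix (Fin n) (Fin n) α) (w : Fin n → α) (j : ℕ) :
    Fin n → α :=
  if h : j < n then A ⟨j, h⟩ else w

theorem StrictlySeparates.rowOr {n : ℕ} {D₁ D₂ : Set (Fin n → ℝ)} {w : Fin n → ℝ} {b : ℝ}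
    {A : Matrix (Fin n) (Fin n) ℝ} (hA : ∀ i, StrictlySeparates D₁ D₂ (A i) b)
    (h : StrictlySeparates D₁ D₂ w b) (j : ℕ) : StrictlySeparates D₁ D₂ (A.rowOr w j) b := by
  unfold Matrix.rowOr
  split_ifs
  exacts [hA _, h]

open Matrix in
/-- If finite sets `D₁, D₂ ⊆ ℝⁿ` are strictly linearly separable,
then for all `k₁, k₂ ≥ 1` and `m = k₁ + k₂` one can construct `m` hyperplanes, the
first `k₁` of which are activated exactly by `D₁` and the last `k₂` exactly by `D₂`;
moreover if `k₁ = n` the first `n` rows can be chosen invertible, so that on `D₁`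
the ReLU image is `(Ax + c', 0, …, 0)` with `x ↦ Ax + c'` an invertible affine map,
and symmetrically when `k₂ = n`. -/
theorem stmt_13 (n : ℕ) (D₁ D₂ : Set (Fin n → ℝ)) (hfin₁ : D₁.Finite) (hfin₂ : D₂.Finite)
    (hsep : ∃ (w : Fin n → ℝ) (b : ℝ), w ≠ 0 ∧
      (∀ x ∈ D₁, 0 < w ⬝ᵥ x + b) ∧ (∀ x ∈ D₂, w ⬝ᵥ x + b ≤ 0))
    (k₁ k₂ m : ℕ) (hm : m = k₁ + k₂) :
    ∃ (v : Fin m → Fin n → ℝ) (c : Fin m → ℝ),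
      (∀ j : Fin m, (j : ℕ) < k₁ →
        (∀ x ∈ D₁, 0 < v j ⬝ᵥ x + c j) ∧ (∀ x ∈ D₂, v j ⬝ᵥ x + c j ≤ 0)) ∧
      (∀ j : Fin m, k₁ ≤ (j : ℕ) →
        (∀ x ∈ D₁, v j ⬝ᵥ x + c j ≤ 0) ∧ (∀ x ∈ D₂, 0 < v j ⬝ᵥ x + c j)) ∧
      (∀ h₁ : k₁ = n, ∃ (A : Matrix (Fin n) (Fin n) ℝ) (c' : Fin n → ℝ), IsUnit A ∧
        (∀ (i : Fin n) (j : Fin n), A i j = v ⟨(i : ℕ), by omega⟩ j) ∧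
        ∀ x ∈ D₁, ∀ j : Fin m,
          max 0 (v j ⬝ᵥ x + c j) =
            if h : (j : ℕ) < n then (A.mulVec x + c') ⟨(j : ℕ), h⟩ else 0) ∧
      (∀ h₂ : k₂ = n, ∃ (A : Matrix (Fin n) (Fin n) ℝ) (c' : Fin n → ℝ), IsUnit A ∧
        (∀ (i : Fin n) (j : Fin n), A i j = v ⟨k₁ + (i : ℕ), by omega⟩ j) ∧
        ∀ x ∈ D₂, ∀ j : Fin m,
          max 0 (v j ⬝ᵥ x + c j) =
            if h : k₁ ≤ (j : ℕ) then
              (A.mulVec x + c') ⟨(j : ℕ) - k₁, by have := j.isLt; omega⟩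
            else 0) := by
  obtain ⟨w, b, -, h₁, h₂⟩ := hsep
  obtain ⟨b, hsep⟩ := exists_strictlySeparates hfin₁ h₁ h₂
  obtain ⟨A₁, hA₁, hrows₁⟩ := hsep.exists_isUnit_forall_row hfin₁ hfin₂
  obtain ⟨A₂, hA₂, hrows₂⟩ := hsep.neg.exists_isUnit_forall_row hfin₂ hfin₁
  let v : Fin m → Fin n → ℝ := fun j =>
    if (j : ℕ) < k₁ then A₁.rowOr w j else A₂.rowOr (-w) (j - k₁)
  let c : Fin m → ℝ := fun j => if (j : ℕ) < k₁ then b else -b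
  have hfirst (j : Fin m) (hj : (j : ℕ) < k₁) : StrictlySeparates D₁ D₂ (v j) (c j) := by
    simpa only [v, c, if_pos hj] using hsep.rowOr hrows₁ j
  have hsecond (j : Fin m) (hj : k₁ ≤ (j : ℕ)) : StrictlySeparates D₂ D₁ (v j) (c j) := by
    simpa only [v, c, if_neg (not_lt.2 hj)] using hsep.neg.rowOr hrows₂ (j - k₁)
  refine ⟨v, c, fun j hj => ⟨(hfirst j hj).1, fun x hx => ((hfirst j hj).2 x hx).le⟩,
    fun j hj => ⟨fun x hx => ((hsecond j hj).2 x hx).le, (hsecond j hj).1⟩, ?_, ?_⟩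
  · intro hk
    refine ⟨A₁, fun _ => b, hA₁, fun i j => by simp [v, rowOr, hk], fun x hx j => ?_⟩
    split_ifs with hj
    · rw [(hfirst j (hk ▸ hj)).max_zero_eq_of_mem_left hx]
      simp [v, c, rowOr, hk, hj, mulVec]
    · exact (hsecond j (by omega)).max_zero_eq_of_mem_right hx
  · intro hk
    refine ⟨A₂, fun _ => -b, hA₂, fun i j => by simp [v, rowOr], fun x hx j => ?_⟩
    split_ifs with hj
    · rw [(hsecond j hj).max_zero_eq_of_mem_left hx]
      have hjn : (j : ℕ) - k₁ < n := by have := j.isLt; omega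
      simp [v, c, rowOr, not_lt.2 hj, hjn, mulVec]
    · exact (hfirst j (by omega)).max_zero_eq_of_mem_right hx
end

section
/- Let D ⊆ ℝⁿ be a finite set, let w_1 ∈ ℝⁿ with first coordinate w_{11} ≠ 0 and b_1 ∈ ℝ satisfy w_1ᵀx + b_1 > 0 for all x ∈ D, and let x_0 ∈ ℝⁿ be any point with w_1ᵀx_0 + b_1 = 0. Then there exist w_2,…,w_n ∈ ℝⁿ and b_2,…,b_n ∈ ℝ such that: (i) the n × n matrix with rows w_1,…,w_n is invertible; (ii) w_iᵀx_0 + b_i = 0 for every i = 1,…,n (all n hyperplanes pass through the common point x_0); and (iii) w_iᵀx + b_i > 0 for every x ∈ D and every i = 1,…,n (all n hyperplanes classify D as the first one does). -/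
open Matrix in
/-- Given a hyperplane `(w₁, b₁)` with nonzero first weight
coordinate, strictly positive on a finite set `D`, and any point `x₀` on it, one can
construct `n - 1` further hyperplanes so that all `n` hyperplanes pass through the
common point `x₀`, all classify `D` positively like the first one, and the `n × n`
matrix of their weight rows is invertible. -/
theorem stmt_14 (n : ℕ) (hn : 0 < n) (D : Set (Fin n → ℝ)) (hfin : D.Finite)
    (w₁ : Fin n → ℝ) (b₁ : ℝ) (hw11 : w₁ ⟨0, hn⟩ ≠ 0)
    (hD : ∀ x ∈ D, 0 < w₁ ⬝ᵥ x + b₁)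
    (x₀ : Fin n → ℝ) (hx₀ : w₁ ⬝ᵥ x₀ + b₁ = 0) :
    ∃ (w : Fin n → Fin n → ℝ) (b : Fin n → ℝ),
      w ⟨0, hn⟩ = w₁ ∧ b ⟨0, hn⟩ = b₁ ∧
      (Matrix.of fun i j => w i j).det ≠ 0 ∧
      (∀ i, w i ⬝ᵥ x₀ + b i = 0) ∧
      (∀ i, ∀ x ∈ D, 0 < w i ⬝ᵥ x + b i) := by
  -- choose a small nonzero ε
  have key : ∀ᶠ ε : ℝ in nhds 0, ∀ x ∈ D, ∀ i : Fin n,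
      0 < (w₁ ⬝ᵥ x + b₁) + ε * (x i - x₀ i) := by
    rw [hfin.eventually_all]
    intro x hx
    rw [Filter.eventually_all]
    intro i
    have hc : ContinuousAt (fun ε : ℝ => (w₁ ⬝ᵥ x + b₁) + ε * (x i - x₀ i)) 0 := by
      fun_prop
    have h0 : (0:ℝ) < (w₁ ⬝ᵥ x + b₁) + (0:ℝ) * (x i - x₀ i) := by
      simpa using hD x hx
    exact hc.eventually (eventually_gt_nhds h0)
  obtain ⟨ε, hεP, hεne⟩ :=
    ((key.filter_mono nhdsWithin_le_nhds).and self_mem_nhdsWithin).exists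
      (f := nhdsWithin (0:ℝ) {(0:ℝ)}ᶜ)
  have hεne : ε ≠ 0 := hεne
  set z : Fin n := ⟨0, hn⟩ with hz
  classical
  set w : Fin n → Fin n → ℝ :=
    fun i => if i = z then w₁ else fun j => w₁ j + (if j = i then ε else 0) with hw
  set b : Fin n → ℝ := fun i => -(w i ⬝ᵥ x₀) with hb
  have hw0 : w z = w₁ := by simp [hw]
  have hb1 : b₁ = -(w₁ ⬝ᵥ x₀) := by linarith
  have hdot : ∀ i, i ≠ z → ∀ y : Fin n → ℝ, w i ⬝ᵥ y = w₁ ⬝ᵥ y + ε * y i := by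
    intro i hi y
    simp only [hw, if_neg hi, dotProduct, add_mul, Finset.sum_add_distrib, ite_mul,
      zero_mul]
    rw [Finset.sum_ite_eq' Finset.univ i (fun j => ε * y j)]
    simp
  refine ⟨w, b, hw0, by simp [hb, hw0, ← hb1], ?_, ?_, ?_⟩
  · -- determinant
    set B : Matrix (Fin n) (Fin n) ℝ :=
      Matrix.of fun i j => if i = z then w₁ j else if j = i then ε else 0 with hB
    have hdet : (Matrix.of fun i j => w i j).det = B.det := by
      apply Matrix.det_eq_of_forall_row_eq_smul_add_const
        (c := fun i => if i = z then 0 else 1) (k := z) (by simp)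
      intro i j
      by_cases hi : i = z
      · simp [hB, hw, hi]
      · simp [hB, hw, hi, add_comm]
    have hBt : B.BlockTriangular id := by
      intro i j hij
      have hiz : i ≠ z := by
        rintro rfl
        simp [hz, Fin.lt_def] at hij
      have hji : j ≠ i := ne_of_lt hij
      simp [hB, hiz, hji]
    rw [hdet, Matrix.det_of_upperTriangular hBt]
    apply Finset.prod_ne_zero_iff.2
    intro i _
    by_cases hi : i = z
    · simpa [hB, hi] using hw11
    · simpa [hB, hi] using hεne
  · intro i
    simp [hb]
  · intro i x hx
    by_cases hi : i = z
    · subst hi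
      rw [hw0]
      have := hD x hx
      simp only [hb, hw0]
      linarith
    · rw [hdot i hi x]
      simp only [hb, hdot i hi x₀]
      have := hεP x hx i
      have hwx₀ : w₁ ⬝ᵥ x₀ = -b₁ := by linarith
      rw [hwx₀]
      ring_nf
      ring_nf at this
      linarith [this]
end
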